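/- arXiv:1704.01876 — 6 statements merged into one kernel-verified Lean document; each statement's English description precedes it below -/
import Mathlib

section
/- For every complex number α with 0 < Re α < 1 and every complex number z with z ∉ (-∞, 0], one has z^α = (sin(απ)/π) · ∫_0^∞ t^{α-1} · z/(t+z) dt, where z^α = exp(α log|z| + iα arg z) with arg z ∈ (-π, π). -/
open MeasureTheory Set Complex Filter

-- lower bound on distance from negative reals
lemma slit_lb {z : ℂ} (hz : z ∈ Complex.slitPlane) :
    ∃ δ : ℝ, 0 < δ ∧ ∀ t : ℝ, 0 ≤ t → δ ≤ ‖(t : ℂ) + z‖ := by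
  rcases hz with h | h
  · refine ⟨z.re, h, fun t ht => ?_⟩
    have h1 : ((t:ℂ) + z).re ≤ ‖(t:ℂ)+z‖ := Complex.re_le_norm _
    simp only [Complex.add_re, Complex.ofReal_re] at h1
    linarith
  · refine ⟨|z.im|, abs_pos.2 h, fun t ht => ?_⟩
    have h1 : |((t:ℂ) + z).im| ≤ ‖(t:ℂ)+z‖ := Complex.abs_im_le_norm _
    simpa [Complex.add_im] using h1

-- the bound function
lemma integrable_bnd {a : ℝ} {n : ℕ} (ha : -1 < a) (ha' : a - n < -1) {c R : ℝ}
    (hc : 0 < c) (hR : 0 ≤ R) :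
    IntegrableOn (fun t : ℝ => t ^ a / max c (t - R) ^ n) (Ioi 0) := by
  have hcont : ContinuousOn (fun t : ℝ => t ^ a / max c (t - R) ^ n) (Ioi 0) := by
    apply ContinuousOn.div
    · exact fun t ht => (Real.continuousAt_rpow_const t a (Or.inl (ne_of_gt ht))).continuousWithinAt
    · exact ((continuous_const.max (continuous_id.sub continuous_const)).pow n).continuousOn
    · intro t _
      positivity
  have key : Ioi (0:ℝ) = Ioc 0 (R+1) ∪ Ioi (R+1) := by
    rw [Ioc_union_Ioi_eq_Ioi]; linarith
  rw [key]
  apply IntegrableOn.union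
  · -- bound by t^a * c⁻ⁿ
    have hint : IntegrableOn (fun t : ℝ => t ^ a * (c ^ n)⁻¹) (Ioc 0 (R+1)) :=
      ((intervalIntegral.intervalIntegrable_rpow' ha).1.mul_const _)
    refine Integrable.mono' hint ((hcont.mono ?_).aestronglyMeasurable measurableSet_Ioc) ?_
    · exact Ioc_subset_Ioi_self
    · rw [ae_restrict_iff' measurableSet_Ioc]
      filter_upwards with t ht
      rw [Real.norm_eq_abs, _root_.abs_of_nonneg
        (div_nonneg (Real.rpow_nonneg ht.1.le a) (by positivity)), div_eq_mul_inv]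
      gcongr
      · exact Real.rpow_nonneg ht.1.le a
      · exact le_max_left _ _
  · -- bound by (R+1)^n * t^(a-n)
    have hint : IntegrableOn (fun t : ℝ => (R+1) ^ n * t ^ (a - n)) (Ioi (R+1)) :=
      (integrableOn_Ioi_rpow_of_lt ha' (by linarith)).const_mul _
    refine Integrable.mono' hint ((hcont.mono ?_).aestronglyMeasurable measurableSet_Ioi) ?_
    · exact fun t ht => lt_trans (by linarith : (0:ℝ) < R+1) ht
    · rw [ae_restrict_iff' measurableSet_Ioi]
      filter_upwards with t ht
      have ht0 : (0:ℝ) < t := by simp only [mem_Ioi] at ht; linarith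
      rw [Real.norm_eq_abs, _root_.abs_of_nonneg (by positivity)]
      have h2 : t - R ≤ max c (t - R) := le_max_right _ _
      have h3 : t / (R+1) ≤ t - R := by
        rw [div_le_iff₀ (by linarith)]
        simp only [mem_Ioi] at ht
        nlinarith
      have h4 : t / (R+1) ≤ max c (t - R) := h3.trans h2
      have h5 : (t / (R+1)) ^ n ≤ max c (t - R) ^ n := by
        gcongr
      calc t ^ a / max c (t - R) ^ n ≤ t ^ a / (t / (R+1)) ^ n :=
            div_le_div_of_nonneg_left (Real.rpow_nonneg ht0.le a) (by positivity) h5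
        _ = (R+1)^n * t ^ (a - n) := by
            rw [div_pow, Real.rpow_sub ht0, div_div_eq_mul_div, Real.rpow_natCast]
            ring

-- pointwise norm bound
lemma norm_bnd {α : ℂ} {z : ℂ} {c R : ℝ} (hc : 0 < c)
    (hzc : ∀ t : ℝ, 0 ≤ t → c ≤ ‖(t:ℂ) + z‖) (hzR : ‖z‖ ≤ R) (n : ℕ)
    {t : ℝ} (ht : t ∈ Ioi (0:ℝ)) :
    ‖(t:ℂ) ^ (α - 1) / ((t:ℂ) + z) ^ n‖ ≤ t ^ (α.re - 1) / max c (t - R) ^ n := by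
  simp only [mem_Ioi] at ht
  rw [norm_div, norm_pow,
    Complex.norm_cpow_eq_rpow_re_of_pos ht, Complex.sub_re, Complex.one_re]
  have h1 : max c (t - R) ≤ ‖(t:ℂ) + z‖ := by
    apply max_le (hzc t ht.le)
    have h2 : ‖(t:ℂ)‖ - ‖z‖ ≤ ‖(t:ℂ) + z‖ := by
      have := norm_sub_le ((t:ℂ) + z) z
      simp only [add_sub_cancel_right] at this
      linarith
    rw [Complex.norm_real, Real.norm_of_nonneg ht.le] at h2
    linarith
  exact div_le_div_of_nonneg_left (Real.rpow_nonneg ht.le _) (by positivity)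
    (pow_le_pow_left₀ (le_max_of_le_left hc.le) h1 n)

-- measurability of the integrand
lemma meas_int {α : ℂ} {z : ℂ} (hzc : ∀ t : ℝ, 0 ≤ t → (t:ℂ) + z ≠ 0) (n : ℕ) :
    AEStronglyMeasurable (fun t : ℝ => (t:ℂ) ^ (α - 1) / ((t:ℂ) + z) ^ n)
      (volume.restrict (Ioi 0)) := by
  apply ContinuousOn.aestronglyMeasurable _ measurableSet_Ioi
  apply ContinuousOn.div
  · apply ContinuousOn.cpow_const Complex.continuous_ofReal.continuousOn
    intro t ht
    exact Or.inl (by simpa using ht)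
  · exact (Complex.continuous_ofReal.continuousOn.add continuousOn_const).pow n
  · intro t ht
    exact pow_ne_zero n (hzc t (le_of_lt (by simpa using ht)))

lemma int_pow (α : ℂ) (h0 : 0 < α.re) (h1 : α.re < 1) {z : ℂ} {c R : ℝ} (hc : 0 < c) (hR : 0 ≤ R)
    (hzc : ∀ t : ℝ, 0 ≤ t → c ≤ ‖(t:ℂ) + z‖) (hzR : ‖z‖ ≤ R) {n : ℕ} (hn : 1 ≤ n) :
    IntegrableOn (fun t : ℝ => (t:ℂ) ^ (α - 1) / ((t:ℂ) + z) ^ n) (Ioi 0) := by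
  have hne : ∀ t : ℝ, 0 ≤ t → (t:ℂ) + z ≠ 0 := by
    intro t ht h
    have := hzc t ht
    rw [h, norm_zero] at this
    linarith
  have hn' : (1:ℝ) ≤ n := by exact_mod_cast hn
  refine Integrable.mono' (integrable_bnd (a := α.re - 1) (n := n) (by linarith)
    (by linarith) hc hR) (meas_int hne n) ?_
  rw [ae_restrict_iff' measurableSet_Ioi]
  filter_upwards with t ht
  exact norm_bnd hc hzc hzR n ht

lemma f_diff (α : ℂ) (h0 : 0 < α.re) (h1 : α.re < 1) {z : ℂ} (hz : z ∈ Complex.slitPlane) :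
    DifferentiableAt ℂ (fun w => ∫ t in Ioi (0:ℝ), (t:ℂ) ^ (α - 1) / ((t:ℂ) + w)) z := by
  obtain ⟨δ, hδ, hlb⟩ := slit_lb hz
  set c : ℝ := δ / 2 with hc_def
  set R : ℝ := ‖z‖ + δ / 2 with hR_def
  have hc : 0 < c := by positivity
  have hR : 0 ≤ R := by positivity
  have hball : ∀ w ∈ Metric.ball z (δ/2), (∀ t : ℝ, 0 ≤ t → c ≤ ‖(t:ℂ) + w‖) ∧ ‖w‖ ≤ R := by
    intro w hw
    rw [Metric.mem_ball, dist_eq_norm] at hw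
    constructor
    · intro t ht
      have h2 : ‖(t:ℂ) + z‖ - ‖w - z‖ ≤ ‖(t:ℂ) + w‖ := by
        have := norm_sub_le ((t:ℂ) + w) (w - z)
        have he : (t:ℂ) + w - (w - z) = (t:ℂ) + z := by ring
        rw [he] at this
        linarith
      have := hlb t ht
      rw [hc_def]
      linarith
    · have h3 : ‖w‖ ≤ ‖w - z‖ + ‖z‖ := by
        have := norm_add_le (w - z) z
        simpa [sub_add_cancel] using this
      rw [hR_def]; linarith
  have hne : ∀ w ∈ Metric.ball z (δ/2), ∀ t : ℝ, 0 ≤ t → (t:ℂ) + w ≠ 0 := by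
    intro w hw t ht h
    have := (hball w hw).1 t ht
    rw [h, norm_zero] at this
    linarith
  have hzball : z ∈ Metric.ball z (δ/2) := Metric.mem_ball_self (by positivity)
  have key := hasDerivAt_integral_of_dominated_loc_of_deriv_le
    (F := fun w (t : ℝ) => (t:ℂ) ^ (α - 1) / ((t:ℂ) + w))
    (F' := fun w (t : ℝ) => -((t:ℂ) ^ (α - 1) / ((t:ℂ) + w) ^ 2))
    (μ := volume.restrict (Ioi 0)) (x₀ := z)
    (bound := fun t : ℝ => t ^ (α.re - 1) / max c (t - R) ^ 2)
    (s := Metric.ball z (δ/2)) (Metric.ball_mem_nhds z (half_pos hδ)) ?_ ?_ ?_ ?_ ?_ ?_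
  · exact key.2.differentiableAt
  · -- measurability of F w
    filter_upwards [Metric.ball_mem_nhds z (half_pos hδ)] with w hw
    have := meas_int (α := α) (hne w hw) 1
    simpa [pow_one] using this
  · -- integrability of F z
    have := int_pow α h0 h1 hc hR (hball z hzball).1 (hball z hzball).2 (n := 1) le_rfl
    simpa [pow_one, IntegrableOn] using this
  · -- measurability of F' z
    exact (meas_int (α := α) (hne z hzball) 2).neg
  · -- bound
    rw [ae_restrict_iff' measurableSet_Ioi]
    filter_upwards with t ht w hw
    rw [norm_neg]
    exact norm_bnd hc (hball w hw).1 (hball w hw).2 2 ht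
  · -- integrability of bound
    exact integrable_bnd (a := α.re - 1) (n := 2) (by linarith) (by push_cast; linarith) hc hR
  · -- differentiability
    rw [ae_restrict_iff' measurableSet_Ioi]
    filter_upwards with t ht w hw
    have h1' : HasDerivAt (fun w : ℂ => (t:ℂ) + w) 1 w := (hasDerivAt_id w).const_add _
    have h2' : HasDerivAt (fun w : ℂ => (t:ℂ) ^ (α - 1) * ((t:ℂ) + w)⁻¹)
        ((t:ℂ) ^ (α - 1) * (-1 / ((t:ℂ) + w) ^ 2)) w :=
      (h1'.inv (hne w hw t (le_of_lt (by simpa using ht)))).const_mul ((t:ℂ) ^ (α - 1))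
    simp only [div_eq_mul_inv]
    exact h2'.congr_deriv (by ring)

lemma slit_preconn : IsPreconnected Complex.slitPlane := by
  have h : IsPathConnected Complex.slitPlane := by
    refine ⟨1, Complex.one_mem_slitPlane, fun {y} hy => JoinedIn.of_segment_subset ?_⟩
    exact Complex.starConvex_one_slitPlane.segment_subset hy
  exact h.isConnected.isPreconnected

lemma f_scale (α : ℂ) {x : ℝ} (hx : 0 < x) :
    (∫ t in Ioi (0:ℝ), (t:ℂ) ^ (α - 1) / ((t:ℂ) + (x:ℂ))) =
      (x:ℂ) ^ (α - 1) * ∫ t in Ioi (0:ℝ), (t:ℂ) ^ (α - 1) / ((t:ℂ) + 1) := by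
  have hx' : (x:ℂ) ≠ 0 := Complex.ofReal_ne_zero.2 (ne_of_gt hx)
  have h := integral_comp_mul_left_Ioi
    (fun t : ℝ => (t:ℂ) ^ (α - 1) / ((t:ℂ) + (x:ℂ))) 0 hx
  rw [mul_zero] at h
  have h2 : (∫ t in Ioi (0:ℝ), ((x * t : ℝ):ℂ) ^ (α - 1) / (((x * t : ℝ):ℂ) + (x:ℂ))) =
      ∫ t in Ioi (0:ℝ), ((x:ℂ) ^ (α - 1) * (x:ℂ)⁻¹) * ((t:ℂ) ^ (α - 1) / ((t:ℂ) + 1)) := by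
    apply setIntegral_congr_fun measurableSet_Ioi
    intro t ht
    simp only [mem_Ioi] at ht
    dsimp only
    have ht1 : ((t:ℂ) + 1) ≠ 0 := by
      intro hcon
      have := congrArg Complex.re hcon
      simp at this
      linarith
    rw [Complex.ofReal_mul, mul_cpow_ofReal_nonneg hx.le ht.le]
    have hden : (x:ℂ) * (t:ℂ) + (x:ℂ) = (x:ℂ) * ((t:ℂ) + 1) := by ring
    rw [hden]
    field_simp
  rw [h2, integral_const_mul] at h
  -- h : ∫ g(x t) = x⁻¹ • ∫ g  becomes  x^(α-1) x⁻¹ * J = x⁻¹ • ∫ g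
  have h3 := congrArg (fun u => (x:ℝ) • u) h
  simp only [smul_smul, mul_inv_cancel₀ (ne_of_gt hx), one_smul] at h3
  rw [← h3, Complex.real_smul]
  field_simp

lemma f_one (α : ℂ) (h0 : 0 < α.re) (h1 : α.re < 1) :
    (∫ t in Ioi (0:ℝ), (t:ℂ) ^ (α - 1) / ((t:ℂ) + 1)) =
      Complex.Gamma α * Complex.Gamma (1 - α) := by
  have h1α : 0 < (1 - α).re := by
    rw [Complex.sub_re, Complex.one_re]; linarith
  have hG := Complex.Gamma_mul_Gamma_eq_betaIntegral h0 h1α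
  rw [show α + (1 - α) = 1 by ring, Complex.Gamma_one, one_mul] at hG
  rw [hG, Complex.betaIntegral, intervalIntegral.integral_of_le zero_le_one,
    integral_Ioc_eq_integral_Ioo]
  have himg : Ioi (0:ℝ) = (fun x : ℝ => x / (1 - x)) '' Ioo 0 1 := by
    ext u
    simp only [mem_Ioi, mem_image, mem_Ioo]
    constructor
    · intro hu
      refine ⟨u / (1 + u), ⟨by positivity, by rw [div_lt_one (by linarith)]; linarith⟩, ?_⟩
      have h1u : (1:ℝ) + u ≠ 0 := by linarith
      have e1 : 1 - u/(1+u) = 1/(1+u) := by field_simp; ring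
      rw [e1]
      field_simp
    · rintro ⟨x, ⟨hx0, hx1⟩, rfl⟩
      exact div_pos hx0 (by linarith)
  have hderiv : ∀ x ∈ Ioo (0:ℝ) 1, HasDerivWithinAt (fun x : ℝ => x / (1 - x))
      (((1 - x) ^ 2)⁻¹) (Ioo 0 1) x := by
    intro x hx
    simp only [mem_Ioo] at hx
    have hne : (1:ℝ) - x ≠ 0 := by linarith
    have hd : HasDerivAt (fun x : ℝ => x / (1 - x))
        ((1 * (1 - x) - x * (0 - 1)) / (1 - x) ^ 2) x :=
      (hasDerivAt_id x).div ((hasDerivAt_const x 1).sub (hasDerivAt_id x)) hne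
    have : (1 * (1 - x) - x * (0 - 1)) / (1 - x) ^ 2 = ((1 - x) ^ 2)⁻¹ := by
      field_simp; ring
    rw [this] at hd
    exact hd.hasDerivWithinAt
  have hinj : InjOn (fun x : ℝ => x / (1 - x)) (Ioo 0 1) := by
    intro x hx y hy hxy
    simp only [mem_Ioo] at hx hy
    simp only at hxy
    have hx1 : (1:ℝ) - x ≠ 0 := by linarith
    have hy1 : (1:ℝ) - y ≠ 0 := by linarith
    field_simp at hxy
    nlinarith [hxy]
  rw [himg, integral_image_eq_integral_abs_deriv_smul measurableSet_Ioo hderiv hinj]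
  apply setIntegral_congr_fun measurableSet_Ioo
  intro x hx
  simp only [mem_Ioo] at hx
  obtain ⟨hx0, hx1⟩ := hx
  have h1x : (0:ℝ) < 1 - x := by linarith
  have hw : ((1:ℂ) - (x:ℂ)) ≠ 0 := by
    intro hcon
    have := congrArg Complex.re hcon
    simp at this
    linarith
  dsimp only
  have hd : ((x / (1 - x) : ℝ) : ℂ) + 1 = ((1:ℂ) - (x:ℂ))⁻¹ := by
    push_cast
    field_simp
    ring
  have hnum : ((x / (1 - x) : ℝ) : ℂ) ^ (α - 1) =
      (x:ℂ) ^ (α - 1) * (((1:ℂ) - (x:ℂ)) ^ (α - 1))⁻¹ := by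
    rw [div_eq_mul_inv, Complex.ofReal_mul, mul_cpow_ofReal_nonneg hx0.le
      (inv_nonneg.2 h1x.le), Complex.ofReal_inv,
      Complex.inv_cpow _ _ (by
        rw [show ((1 - x : ℝ):ℂ) = ((1:ℂ) - (x:ℂ)) by push_cast; ring] at *
        rw [show ((1:ℂ) - (x:ℂ)) = ((1 - x : ℝ):ℂ) by push_cast; ring,
          Complex.arg_ofReal_of_nonneg h1x.le]
        exact Real.pi_ne_zero.symm)]
    push_cast
    ring_nf
  rw [hd, hnum]
  have habs : |((1 - x:ℝ) ^ 2)⁻¹| = ((1 - x:ℝ) ^ 2)⁻¹ := _root_.abs_of_nonneg (by positivity)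
  rw [habs]
  have hsm : (((1 - x:ℝ) ^ 2)⁻¹ : ℝ) • ((x:ℂ) ^ (α - 1) * (((1:ℂ) - (x:ℂ)) ^ (α - 1))⁻¹ /
      (((1:ℂ) - (x:ℂ))⁻¹)) = ((((1:ℂ) - (x:ℂ)) ^ 2)⁻¹) * ((x:ℂ) ^ (α - 1) *
      (((1:ℂ) - (x:ℂ)) ^ (α - 1))⁻¹ * ((1:ℂ) - (x:ℂ))) := by
    rw [Complex.real_smul]
    push_cast
    rw [div_eq_mul_inv, inv_inv]
  rw [hsm]
  have hpow : ((1:ℂ) - (x:ℂ)) ^ (1 - α - 1) =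
      (((1:ℂ) - (x:ℂ)) ^ (α - 1))⁻¹ * ((1:ℂ) - (x:ℂ))⁻¹ := by
    rw [show (1 - α - 1 : ℂ) = -(α - 1) + -1 by ring, Complex.cpow_add _ _ hw,
      Complex.cpow_neg, Complex.cpow_neg_one]
  rw [hpow]
  have hcpne : (((1:ℂ) - (x:ℂ)) ^ (α - 1)) ≠ 0 := by
    intro hcon
    exact hw (Complex.cpow_eq_zero_iff _ _ |>.1 hcon).1
  field_simp

/-- For `0 < Re α < 1` and `z` off the negative real axis (including 0),
`z^α = (sin(απ)/π) ∫_0^∞ t^(α-1) z/(t+z) dt`. -/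
theorem stmt0 (α z : ℂ) (h0 : 0 < α.re) (h1 : α.re < 1)
    (hz : z ∈ Complex.slitPlane) :
    z ^ α = (Complex.sin (α * Real.pi) / Real.pi) *
      ∫ t in Ioi (0:ℝ), (t : ℂ) ^ (α - 1) * (z / (t + z)) := by
  set f : ℂ → ℂ := fun w => ∫ t in Ioi (0:ℝ), (t:ℂ) ^ (α - 1) / ((t:ℂ) + w) with hf_def
  set C : ℂ := Complex.Gamma α * Complex.Gamma (1 - α) with hC_def
  set g : ℂ → ℂ := fun w => C * w ^ (α - 1) with hg_def
  have hπ : (Real.pi : ℂ) ≠ 0 := Complex.ofReal_ne_zero.2 Real.pi_ne_zero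
  have hfA : AnalyticOnNhd ℂ f Complex.slitPlane :=
    DifferentiableOn.analyticOnNhd
      (fun w hw => (f_diff α h0 h1 hw).differentiableWithinAt) Complex.isOpen_slitPlane
  have hgA : AnalyticOnNhd ℂ g Complex.slitPlane := fun w hw =>
    analyticAt_const.mul ((analyticAt_id).cpow analyticAt_const hw)
  have heq : ∀ x : ℝ, 0 < x → f (x:ℂ) = g (x:ℂ) := by
    intro x hx
    have h1' : f (x:ℂ) = (x:ℂ) ^ (α - 1) * f 1 := by
      rw [hf_def]
      exact f_scale α hx
    rw [h1', hg_def]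
    have : f 1 = C := by
      rw [hf_def, hC_def]
      exact f_one α h0 h1
    rw [this, mul_comm]
  have hfreq : ∃ᶠ w in nhdsWithin 1 {(1:ℂ)}ᶜ, f w = g w := by
    have htend : Filter.Tendsto (fun n : ℕ => ((1 + 1/((n:ℝ)+1) : ℝ) : ℂ)) Filter.atTop
        (nhdsWithin 1 {(1:ℂ)}ᶜ) := by
      rw [tendsto_nhdsWithin_iff]
      constructor
      · have h2 : Filter.Tendsto (fun n : ℕ => (1 + 1/((n:ℝ)+1) : ℝ)) Filter.atTop (nhds 1) := by
          have := tendsto_one_div_add_atTop_nhds_zero_nat (𝕜 := ℝ)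
          have h3 := this.const_add (1:ℝ)
          simpa using h3
        have h4 := (Complex.continuous_ofReal.tendsto 1).comp h2
        simpa [Function.comp_def] using h4
      · filter_upwards with n
        simp only [mem_compl_iff, mem_singleton_iff]
        intro hcon
        have := Complex.ofReal_injective (hcon.trans (by norm_num : (1:ℂ) = ((1:ℝ):ℂ)))
        have hp : 0 < 1/((n:ℝ)+1) := by positivity
        linarith
    exact htend.frequently (Filter.Eventually.of_forall
      (fun n => heq _ (by positivity))).frequently
  have hEq : EqOn f g Complex.slitPlane :=
    hfA.eqOn_of_preconnected_of_frequently_eq hgA slit_preconn Complex.one_mem_slitPlane hfreq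
  have hfz : f z = C * z ^ (α - 1) := hEq hz
  have hz0 : z ≠ 0 := Complex.slitPlane_ne_zero hz
  have hpull : (∫ t in Ioi (0:ℝ), (t:ℂ) ^ (α - 1) * (z / ((t:ℂ) + z))) = z * f z := by
    rw [hf_def]
    simp only
    rw [← MeasureTheory.integral_const_mul]
    apply setIntegral_congr_fun measurableSet_Ioi
    intro t ht
    ring
  rw [hpull, hfz]
  have hC : C = (Real.pi : ℂ) / Complex.sin (α * Real.pi) := by
    rw [hC_def, Complex.Gamma_mul_Gamma_one_sub, mul_comm]
  have hsin : Complex.sin (α * Real.pi) ≠ 0 := by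
    rw [Ne, Complex.sin_eq_zero_iff]
    rintro ⟨k, hk⟩
    have hαk : α = (k:ℂ) := mul_right_cancel₀ hπ hk
    rw [hαk] at h0 h1
    simp only [Complex.intCast_re] at h0 h1
    have hk0 : (0:ℤ) < k := by exact_mod_cast h0
    have hk1 : k < 1 := by exact_mod_cast h1
    omega
  have hzz : z * z ^ (α - 1) = z ^ α := by
    rw [Complex.cpow_sub _ _ hz0, Complex.cpow_one]
    field_simp
  rw [hC]
  field_simp
  rw [← hzz]
end

section
/- Let A be a non-negative operator in a Banach space X, let D be the closure of D(A), and let A_D be the part of A in D (domain {x ∈ D(A) ∩ D : Ax ∈ D}). Then the closure of the Balakrishnan operator J^α_{A_D} equals the closure of J^α_A, for every α with 0 < Re α < 1. -/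
open MeasureTheory Set Filter Topology

section helpers

variable {X : Type*} [NormedAddCommGroup X] [NormedSpace ℂ X]
  {A : X →ₗ.[ℂ] X} {R : ℝ → X →L[ℂ] X} {M : ℝ}

/-- norm bound for the resolvent -/
lemma bal_normR (hM : ∀ l : ℝ, 0 < l → ‖(l : ℂ) • R l‖ ≤ M) {l : ℝ} (hl : 0 < l) (w : X) :
    ‖R l w‖ ≤ M / l * ‖w‖ := by
  have h1 : ‖((l : ℂ) • R l) w‖ ≤ M * ‖w‖ :=
    le_trans ((ContinuousLinearMap.le_opNorm _ w)) (by
      gcongr; exact hM l hl)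
  have h2 : ‖((l : ℂ) • R l) w‖ = l * ‖R l w‖ := by
    simp [norm_smul, Complex.norm_real, abs_of_pos hl]
  rw [h2] at h1
  rw [div_mul_eq_mul_div, le_div_iff₀ hl]
  nlinarith [norm_nonneg (R l w)]

/-- `R l (A z) = z - l • R l z` for `z` in the domain. -/
lemma bal_res (hRinv : ∀ l : ℝ, 0 < l → ∀ x : A.domain, R l (A x + (l : ℂ) • (x : X)) = x)
    {l : ℝ} (hl : 0 < l) (z : A.domain) :
    R l (A z) = (z : X) - (l : ℂ) • R l (z : X) := by
  have := hRinv l hl z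
  rw [map_add, _root_.map_smul] at this
  linear_combination (norm := module) this

/-- value of `A` at `R l y`. -/
lemma bal_val (hR : ∀ l : ℝ, 0 < l → ∀ y : X,
      ∃ h : R l y ∈ A.domain, A ⟨R l y, h⟩ + (l : ℂ) • R l y = y)
    {l : ℝ} (hl : 0 < l) (y : X) (h : R l y ∈ A.domain) :
    A ⟨R l y, h⟩ = y - (l : ℂ) • R l y := by
  obtain ⟨h', e⟩ := hR l hl y
  exact eq_sub_of_add_eq e

end helpers

section helpers2

variable {X : Type*} [NormedAddCommGroup X] [NormedSpace ℂ X]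
  {A : X →ₗ.[ℂ] X} {R : ℝ → X →L[ℂ] X} {M : ℝ}

/-- resolvent identity -/
lemma bal_resid (hR : ∀ l : ℝ, 0 < l → ∀ y : X,
      ∃ h : R l y ∈ A.domain, A ⟨R l y, h⟩ + (l : ℂ) • R l y = y)
    (hRinv : ∀ l : ℝ, 0 < l → ∀ x : A.domain, R l (A x + (l : ℂ) • (x : X)) = x)
    {s t : ℝ} (hs : 0 < s) (ht : 0 < t) (w : X) :
    R t w - R s w = ((s : ℂ) - (t : ℂ)) • R t (R s w) := by
  obtain ⟨h, e⟩ := hR s hs w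
  have hv : A ⟨R s w, h⟩ = w - (s : ℂ) • R s w := eq_sub_of_add_eq e
  have h2 := hRinv t ht ⟨R s w, h⟩
  rw [hv] at h2
  simp only at h2
  have h3 : R t (w - (s:ℂ) • R s w + (t:ℂ) • R s w) = R s w := h2
  rw [map_add, map_sub, _root_.map_smul, _root_.map_smul] at h3
  linear_combination (norm := module) h3

/-- continuity of the resolvent in the parameter -/
lemma bal_cont (hR : ∀ l : ℝ, 0 < l → ∀ y : X,
      ∃ h : R l y ∈ A.domain, A ⟨R l y, h⟩ + (l : ℂ) • R l y = y)
    (hRinv : ∀ l : ℝ, 0 < l → ∀ x : A.domain, R l (A x + (l : ℂ) • (x : X)) = x)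
    (hM : ∀ l : ℝ, 0 < l → ‖(l : ℂ) • R l‖ ≤ M) (w : X) :
    ContinuousOn (fun t : ℝ => R t w) (Ioi 0) := by
  intro t₀ ht₀
  rw [mem_Ioi] at ht₀
  have key : ∀ t ∈ Ioi (0:ℝ), ‖R t w - R t₀ w‖ ≤ |t₀ - t| * (M / t) * ‖R t₀ w‖ := by
    intro t ht
    rw [mem_Ioi] at ht
    rw [bal_resid hR hRinv ht₀ ht w]
    rw [norm_smul]
    have : ‖(t₀ : ℂ) - (t : ℂ)‖ = |t₀ - t| := by
      rw [← Complex.ofReal_sub, Complex.norm_real, Real.norm_eq_abs]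
    rw [this, mul_assoc]
    gcongr
    exact bal_normR hM ht _
  have hb : Tendsto (fun t => |t₀ - t| * (M / t) * ‖R t₀ w‖) (𝓝[Ioi 0] t₀) (𝓝 0) := by
    have h1 : Tendsto (fun t : ℝ => |t₀ - t| * (M / t) * ‖R t₀ w‖) (𝓝 t₀)
        (𝓝 (|t₀ - t₀| * (M / t₀) * ‖R t₀ w‖)) := by
      apply Tendsto.mul_const
      exact ((continuous_abs.comp (continuous_const.sub continuous_id)).tendsto t₀).mul
        (tendsto_const_nhds.div tendsto_id ht₀.ne')
    simpa using h1.mono_left nhdsWithin_le_nhds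
  have : Tendsto (fun t => ‖R t w - R t₀ w‖) (𝓝[Ioi 0] t₀) (𝓝 0) := by
    apply squeeze_zero' (g := fun t => |t₀ - t| * (M / t) * ‖R t₀ w‖)
    · exact Eventually.of_forall fun t => norm_nonneg _
    · exact eventually_nhdsWithin_of_forall key
    · exact hb
  exact tendsto_iff_norm_sub_tendsto_zero.mpr this

/-- continuity / measurability of the integrand -/
lemma bal_meas (hR : ∀ l : ℝ, 0 < l → ∀ y : X,
      ∃ h : R l y ∈ A.domain, A ⟨R l y, h⟩ + (l : ℂ) • R l y = y)
    (hRinv : ∀ l : ℝ, 0 < l → ∀ x : A.domain, R l (A x + (l : ℂ) • (x : X)) = x)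
    (hM : ∀ l : ℝ, 0 < l → ‖(l : ℂ) • R l‖ ≤ M) (α : ℂ) (w : X) :
    AEStronglyMeasurable (fun t : ℝ => ((t : ℂ) ^ (α - 1)) • R t w)
      (volume.restrict (Ioi 0)) := by
  apply ContinuousOn.aestronglyMeasurable _ measurableSet_Ioi
  apply ContinuousOn.smul _ (bal_cont hR hRinv hM w)
  intro t ht
  rw [mem_Ioi] at ht
  exact ((continuousAt_cpow_const (Complex.ofReal_mem_slitPlane.2 ht)).comp
    Complex.continuous_ofReal.continuousAt).continuousWithinAt

end helpers2

lemma bal_phi_cont {re : ℝ} : ContinuousOn (fun t : ℝ => t ^ (re - 1) * min 1 t⁻¹) (Ioi 0) := by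
  intro t ht
  rw [mem_Ioi] at ht
  apply ContinuousAt.continuousWithinAt
  exact (Real.continuousAt_rpow_const t _ (Or.inl ht.ne')).mul
    (continuousAt_const.min (continuousAt_inv₀ ht.ne'))

lemma bal_bound_int {re : ℝ} (h0 : 0 < re) (h1 : re < 1) (K : ℝ) :
    Integrable (fun t : ℝ => K * (t ^ (re - 1) * min 1 t⁻¹)) (volume.restrict (Ioi 0)) := by
  have : IntegrableOn (fun t : ℝ => t ^ (re - 1) * min 1 t⁻¹) (Ioi 0) := by
    rw [← Ioc_union_Ioi_eq_Ioi (zero_le_one (α := ℝ))]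
    apply IntegrableOn.union
    · have hg : IntegrableOn (fun t : ℝ => t ^ (re - 1)) (Ioc 0 1) := by
        have := intervalIntegral.intervalIntegrable_rpow' (a := 0) (b := 1)
          (r := re - 1) (by linarith)
        rwa [intervalIntegrable_iff_integrableOn_Ioc_of_le zero_le_one] at this
      apply Integrable.mono' hg
      · exact (bal_phi_cont.mono Ioc_subset_Ioi_self).aestronglyMeasurable measurableSet_Ioc
      · rw [ae_restrict_iff' measurableSet_Ioc]
        apply ae_of_all
        intro t ht
        have ht0 : (0:ℝ) < t := ht.1
        have hnn : (0:ℝ) ≤ t ^ (re - 1) := Real.rpow_nonneg ht0.le _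
        have hmin0 : (0:ℝ) ≤ min 1 t⁻¹ := le_min zero_le_one (by positivity)
        rw [Real.norm_eq_abs, abs_of_nonneg (mul_nonneg hnn hmin0)]
        calc t ^ (re - 1) * min 1 t⁻¹ ≤ t ^ (re - 1) * 1 := by gcongr; exact min_le_left _ _
          _ = t ^ (re - 1) := mul_one _
    · have hg : IntegrableOn (fun t : ℝ => t ^ (re - 2)) (Ioi 1) :=
        integrableOn_Ioi_rpow_of_lt (by linarith) one_pos
      apply Integrable.mono' hg
      · exact (bal_phi_cont.mono fun t (ht : t ∈ Ioi (1:ℝ)) => mem_Ioi.2 (lt_trans one_pos ht)).aestronglyMeasurable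
          measurableSet_Ioi
      · rw [ae_restrict_iff' measurableSet_Ioi]
        apply ae_of_all
        intro t ht
        rw [mem_Ioi] at ht
        have ht0 : (0:ℝ) < t := lt_trans one_pos ht
        have hnn : (0:ℝ) ≤ t ^ (re - 1) := Real.rpow_nonneg ht0.le _
        have hmin0 : (0:ℝ) ≤ min 1 t⁻¹ := le_min zero_le_one (by positivity)
        rw [Real.norm_eq_abs, abs_of_nonneg (mul_nonneg hnn hmin0)]
        calc t ^ (re - 1) * min 1 t⁻¹ ≤ t ^ (re - 1) * t⁻¹ := by
              gcongr; exact min_le_right _ _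
          _ = t ^ (re - 2) := by
              rw [← Real.rpow_neg_one t, ← Real.rpow_add ht0]; ring_nf
  exact (this.const_mul K)

/-- Let `A` be non-negative in `X`, `D := closure D(A)`, and `A_D` the part of `A` in `D`.
Then the closures of the Balakrishnan operators `J^α_{A_D}` and `J^α_A` coincide, expressed
as equality of the closures of their graphs.  (For `x ∈ D(A_D)` one has
`(t + A_D)⁻¹ A_D x = (t + A)⁻¹ A x`, so both graphs are built from the same integral.) -/
theorem stmt5 {X : Type*} [NormedAddCommGroup X] [NormedSpace ℂ X] [CompleteSpace X]
    (A : X →ₗ.[ℂ] X) (R : ℝ → X →L[ℂ] X) (M : ℝ)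
    (α : ℂ) (h0 : 0 < α.re) (h1 : α.re < 1)
    (hR : ∀ l : ℝ, 0 < l → ∀ y : X,
      ∃ h : R l y ∈ A.domain, A ⟨R l y, h⟩ + (l : ℂ) • R l y = y)
    (hRinv : ∀ l : ℝ, 0 < l → ∀ x : A.domain, R l (A x + (l : ℂ) • (x : X)) = x)
    (hM : ∀ l : ℝ, 0 < l → ‖(l : ℂ) • R l‖ ≤ M) :
    closure {p : X × X | ∃ hx : p.1 ∈ A.domain,
        p.2 = (Complex.sin (α * Real.pi) / (Real.pi : ℂ)) •
          ∫ t in Ioi (0:ℝ), ((t : ℂ) ^ (α - 1)) • R t (A ⟨p.1, hx⟩)} =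
      closure {p : X × X | ∃ hx : p.1 ∈ A.domain,
        p.1 ∈ closure (A.domain : Set X) ∧
        A ⟨p.1, hx⟩ ∈ closure (A.domain : Set X) ∧
        p.2 = (Complex.sin (α * Real.pi) / (Real.pi : ℂ)) •
          ∫ t in Ioi (0:ℝ), ((t : ℂ) ^ (α - 1)) • R t (A ⟨p.1, hx⟩)} := by
  have Mnn : 0 ≤ M := le_trans (norm_nonneg _) (hM 1 one_pos)
  set c : ℂ := Complex.sin (α * Real.pi) / (Real.pi : ℂ) with hc
  apply Set.Subset.antisymm
  · -- main direction
    apply closure_minimal _ isClosed_closure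
    rintro ⟨x, v⟩ ⟨hx, hp2⟩
    simp only at hx hp2 ⊢
    set y : X := A ⟨x, hx⟩ with hy
    -- the approximating sequence
    set l : ℕ → ℝ := fun n => (n : ℝ) + 1 with hldef
    have hl : ∀ n, 0 < l n := fun n => by positivity
    have hl_top : Tendsto l atTop atTop :=
      tendsto_atTop_add_const_right _ 1 tendsto_natCast_atTop_atTop
    have hinv0 : ∀ C : ℝ, Tendsto (fun n => C / l n) atTop (𝓝 0) := fun C =>
      Tendsto.div_atTop tendsto_const_nhds hl_top
    have hRxdom : ∀ n, R (l n) x ∈ A.domain := fun n => (hR (l n) (hl n) x).choose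
    have hRydom : ∀ n, R (l n) y ∈ A.domain := fun n => (hR (l n) (hl n) y).choose
    set xs : ℕ → X := fun n => ((l n : ℝ) : ℂ) • R (l n) x with hxs
    set w : ℕ → X := fun n => ((l n : ℝ) : ℂ) • R (l n) y with hw
    have hxsdom : ∀ n, xs n ∈ A.domain := fun n => A.domain.smul_mem _ (hRxdom n)
    have hwdom : ∀ n, w n ∈ A.domain := fun n => A.domain.smul_mem _ (hRydom n)
    have hnsmul : ∀ (t : ℝ), 0 < t → ∀ v : X, ‖((t : ℝ) : ℂ) • v‖ = t * ‖v‖ := by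
      intro t ht v; simp [norm_smul, Complex.norm_real, abs_of_pos ht]
    -- R (l n) y = x - l n • R (l n) x
    have hRyx : ∀ n, R (l n) y = x - ((l n : ℝ) : ℂ) • R (l n) x := fun n =>
      bal_res hRinv (hl n) ⟨x, hx⟩
    -- value of A at xs n
    have hAxs : ∀ n (h : xs n ∈ A.domain), A ⟨xs n, h⟩ = w n := by
      intro n h
      have e1 : (⟨xs n, h⟩ : A.domain) = ((l n : ℝ) : ℂ) • (⟨R (l n) x, hRxdom n⟩ : A.domain) :=
        Subtype.ext rfl
      rw [e1, A.map_smul, bal_val hR (hl n) x (hRxdom n), hw]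
      simp only
      rw [hRyx n]
    -- norm bounds
    have hxs_norm : ∀ n, ‖xs n‖ ≤ M * ‖x‖ := by
      intro n
      rw [hxs]; simp only
      rw [hnsmul (l n) (hl n)]
      calc l n * ‖R (l n) x‖ ≤ l n * (M / l n * ‖x‖) := by
            gcongr; exact bal_normR hM (hl n) x
        _ = M * ‖x‖ := by have := (hl n).ne'; field_simp
    have hw_norm : ∀ n, ‖w n‖ ≤ M * ‖y‖ := by
      intro n
      rw [hw]; simp only
      rw [hnsmul (l n) (hl n)]
      calc l n * ‖R (l n) y‖ ≤ l n * (M / l n * ‖y‖) := by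
            gcongr; exact bal_normR hM (hl n) y
        _ = M * ‖y‖ := by have := (hl n).ne'; field_simp
    -- integrand sequence
    set F : ℕ → ℝ → X := fun n t => ((t : ℂ) ^ (α - 1)) • R t (w n) with hF
    set f : ℝ → X := fun t => ((t : ℂ) ^ (α - 1)) • R t y with hf
    have hre : (α - 1).re = α.re - 1 := by simp
    have hcpow : ∀ t : ℝ, 0 < t → ‖((t : ℂ) ^ (α - 1))‖ = t ^ (α.re - 1) := by
      intro t ht
      rw [Complex.norm_cpow_eq_rpow_re_of_pos ht, hre]
    set K : ℝ := max ((1 + M) * (M * ‖x‖)) (M * (M * ‖y‖)) with hK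
    -- pointwise domination
    have h_bound : ∀ n, ∀ᵐ t ∂(volume.restrict (Ioi (0:ℝ))),
        ‖F n t‖ ≤ K * (t ^ (α.re - 1) * min 1 t⁻¹) := by
      intro n
      rw [ae_restrict_iff' measurableSet_Ioi]
      apply ae_of_all
      intro t ht
      rw [mem_Ioi] at ht
      have hRb : ‖R t (w n)‖ ≤ K * min 1 t⁻¹ := by
        have hb1 : ‖R t (w n)‖ ≤ (1 + M) * (M * ‖x‖) := by
          have e : R t (A (⟨xs n, hxsdom n⟩ : A.domain)) =
              xs n - ((t : ℝ) : ℂ) • R t (xs n) := bal_res hRinv ht _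
          rw [hAxs n (hxsdom n)] at e
          rw [e]
          calc ‖xs n - ((t : ℝ) : ℂ) • R t (xs n)‖
              ≤ ‖xs n‖ + ‖((t : ℝ) : ℂ) • R t (xs n)‖ := norm_sub_le _ _
            _ ≤ M * ‖x‖ + t * (M / t * ‖xs n‖) := by
                rw [hnsmul t ht]
                gcongr
                · exact hxs_norm n
                · exact bal_normR hM ht _
            _ = M * ‖x‖ + M * ‖xs n‖ := by field_simp
            _ ≤ M * ‖x‖ + M * (M * ‖x‖) := by gcongr; exact hxs_norm n
            _ = (1 + M) * (M * ‖x‖) := by ring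
        have hb2 : ‖R t (w n)‖ ≤ (M * (M * ‖y‖)) * t⁻¹ := by
          calc ‖R t (w n)‖ ≤ M / t * ‖w n‖ := bal_normR hM ht _
            _ ≤ M / t * (M * ‖y‖) :=
                mul_le_mul_of_nonneg_left (hw_norm n) (by positivity)
            _ = (M * (M * ‖y‖)) * t⁻¹ := by field_simp
        rcases le_total (1:ℝ) t⁻¹ with hcase | hcase
        · rw [min_eq_left hcase, mul_one]
          exact le_trans hb1 (le_max_left _ _)
        · rw [min_eq_right hcase]
          exact le_trans hb2
            (mul_le_mul_of_nonneg_right (le_max_right _ _) (inv_nonneg.2 ht.le))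
      calc ‖F n t‖ = t ^ (α.re - 1) * ‖R t (w n)‖ := by
            rw [hF]; simp only [norm_smul]; rw [hcpow t ht]
        _ ≤ t ^ (α.re - 1) * (K * min 1 t⁻¹) := by
            gcongr
        _ = K * (t ^ (α.re - 1) * min 1 t⁻¹) := by ring
    -- pointwise convergence
    have h_lim : ∀ᵐ t ∂(volume.restrict (Ioi (0:ℝ))),
        Tendsto (fun n => F n t) atTop (𝓝 (f t)) := by
      rw [ae_restrict_iff' measurableSet_Ioi]
      apply ae_of_all
      intro t ht
      rw [mem_Ioi] at ht
      rw [tendsto_iff_norm_sub_tendsto_zero]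
      have key : ∀ n, ‖F n t - f t‖ ≤
          t ^ (α.re - 1) * ((1 + M) * (M * ‖y‖)) / l n := by
        intro n
        have hdiff : w n - y = -(y - ((l n : ℝ) : ℂ) • R (l n) y) := by
          rw [hw]; simp only; abel
        have hAz : A (⟨R (l n) y, hRydom n⟩ : A.domain) =
            y - ((l n : ℝ) : ℂ) • R (l n) y := bal_val hR (hl n) y (hRydom n)
        have e : R t (A (⟨R (l n) y, hRydom n⟩ : A.domain)) =
            R (l n) y - ((t : ℝ) : ℂ) • R t (R (l n) y) := bal_res hRinv ht _
        rw [hAz] at e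
        have e2 : R t (w n - y) = -(R (l n) y - ((t : ℝ) : ℂ) • R t (R (l n) y)) := by
          rw [hdiff, map_neg, e]
        have hzn : ‖R (l n) y‖ ≤ M / l n * ‖y‖ := bal_normR hM (hl n) y
        have hnorm : ‖R t (w n - y)‖ ≤ (1 + M) * (M / l n * ‖y‖) := by
          rw [e2, norm_neg]
          calc ‖R (l n) y - ((t : ℝ) : ℂ) • R t (R (l n) y)‖
              ≤ ‖R (l n) y‖ + ‖((t : ℝ) : ℂ) • R t (R (l n) y)‖ := norm_sub_le _ _
            _ ≤ M / l n * ‖y‖ + t * (M / t * ‖R (l n) y‖) := by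
                rw [hnsmul t ht]
                gcongr
                exact bal_normR hM ht _
            _ = M / l n * ‖y‖ + M * ‖R (l n) y‖ := by field_simp
            _ ≤ M / l n * ‖y‖ + M * (M / l n * ‖y‖) := by gcongr
            _ = (1 + M) * (M / l n * ‖y‖) := by ring
        calc ‖F n t - f t‖ = t ^ (α.re - 1) * ‖R t (w n - y)‖ := by
              rw [hF, hf]; simp only [← smul_sub, norm_smul, ← ContinuousLinearMap.map_sub]
              rw [hcpow t ht]
          _ ≤ t ^ (α.re - 1) * ((1 + M) * (M / l n * ‖y‖)) := by
              gcongr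
          _ = t ^ (α.re - 1) * ((1 + M) * (M * ‖y‖)) / l n := by
              field_simp
      apply squeeze_zero (fun n => norm_nonneg _) key
      exact hinv0 _
    -- dominated convergence
    have hconv : Tendsto (fun n => ∫ t in Ioi (0:ℝ), F n t) atTop
        (𝓝 (∫ t in Ioi (0:ℝ), f t)) :=
      tendsto_integral_of_dominated_convergence _
        (fun n => bal_meas hR hRinv hM α (w n)) (bal_bound_int h0 h1 K) h_bound h_lim
    -- convergence of the first components
    have hx_conv : Tendsto xs atTop (𝓝 x) := by
      rw [tendsto_iff_norm_sub_tendsto_zero]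
      have key : ∀ n, ‖xs n - x‖ ≤ M / l n * ‖y‖ := by
        intro n
        have : xs n - x = -(R (l n) y) := by
          rw [hRyx n, hxs]; simp only; abel
        rw [this, norm_neg]
        exact bal_normR hM (hl n) y
      apply squeeze_zero (fun n => norm_nonneg _) key
      have : (fun n => M / l n * ‖y‖) = fun n => M * ‖y‖ / l n := by
        funext n; field_simp
      rw [this]
      exact hinv0 _
    -- the approximating points
    have hmem : ∀ n, ((xs n, c • ∫ t in Ioi (0:ℝ), F n t) : X × X) ∈
        {p : X × X | ∃ hx : p.1 ∈ A.domain,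
          p.1 ∈ closure (A.domain : Set X) ∧
          A ⟨p.1, hx⟩ ∈ closure (A.domain : Set X) ∧
          p.2 = c • ∫ t in Ioi (0:ℝ), ((t : ℂ) ^ (α - 1)) • R t (A ⟨p.1, hx⟩)} := by
      intro n
      refine ⟨hxsdom n, subset_closure (hxsdom n), ?_, ?_⟩
      · rw [hAxs n (hxsdom n)]
        exact subset_closure (hwdom n)
      · simp only
        rw [hAxs n (hxsdom n)]
    have htend : Tendsto (fun n => ((xs n, c • ∫ t in Ioi (0:ℝ), F n t) : X × X))
        atTop (𝓝 (x, v)) := by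
      have h2 : Tendsto (fun n => c • ∫ t in Ioi (0:ℝ), F n t) atTop (𝓝 v) := by
        rw [hp2]
        exact hconv.const_smul c
      exact hx_conv.prodMk_nhds h2
    exact mem_closure_of_tendsto htend (Eventually.of_forall hmem)
  · apply closure_mono
    rintro p ⟨hx, _, _, h2⟩
    exact ⟨hx, h2⟩
end

section
/- Let (T(t))_{t≥0} be a bounded C₀-semigroup on a Banach space D with M = sup_t ‖T(t)‖, and let α ∈ ℂ with 0 < Re α < 1. For x ∈ D and t > 0 define U(t)x := (1/Γ(α)) (t/2)^{2α} ∫_0^∞ r^{-α-1} e^{-t²/(4r)} T(r)x dr, and U(0)x := x. Then for every x ∈ D the map t ↦ U(t)x is continuous and bounded on [0,∞), with ‖U(t)x‖ ≤ M Γ(Re α)/|Γ(α)| · ‖x‖ for all t ≥ 0. -/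
open MeasureTheory Set

lemma aux_scal {c s : ℝ} (hc : 0 < c) (hs : 0 < s) (α : ℂ) :
    ((c * (s ^ 2)⁻¹ : ℝ) : ℂ) * ((c * s⁻¹ : ℝ) : ℂ) ^ (-α - 1) =
      (c : ℂ) ^ (-α) * (s : ℂ) ^ (α - 1) := by
  have hcne : (c : ℂ) ≠ 0 := Complex.ofReal_ne_zero.mpr hc.ne'
  have hsne : (s : ℂ) ≠ 0 := Complex.ofReal_ne_zero.mpr hs.ne'
  have harg : ((s : ℂ)).arg ≠ Real.pi := by
    rw [Complex.arg_ofReal_of_nonneg hs.le]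
    exact Ne.symm Real.pi_ne_zero
  have h1 : (c : ℂ) ^ (-α) = (c : ℂ) * (c : ℂ) ^ (-α - 1) := by
    conv_lhs => rw [show -α = 1 + (-α - 1) by ring]
    rw [Complex.cpow_add _ _ hcne, Complex.cpow_one]
  have h2 : (s : ℂ) ^ (α - 1) = (s : ℂ) ^ (-(-α - 1)) * ((s : ℂ) ^ (2 : ℕ))⁻¹ := by
    rw [← Complex.cpow_natCast, ← Complex.cpow_neg, ← Complex.cpow_add _ _ hsne]
    congr 1
    push_cast
    ring
  rw [show ((c * s⁻¹ : ℝ) : ℂ) = ((c : ℝ) : ℂ) * ((s⁻¹ : ℝ) : ℂ) from Complex.ofReal_mul c s⁻¹,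
    Complex.mul_cpow_ofReal_nonneg hc.le (inv_nonneg.mpr hs.le), Complex.ofReal_inv,
    Complex.inv_cpow _ _ harg, ← Complex.cpow_neg, h1, h2]
  push_cast
  ring

lemma aux_pow {t : ℝ} (ht : 0 < t) (α : ℂ) :
    ((t : ℂ) / 2) ^ (2 * α) = ((t ^ 2 / 4 : ℝ) : ℂ) ^ α := by
  have h : ((t : ℂ) / 2) = ((t / 2 : ℝ) : ℂ) := by push_cast; ring
  have hlog : (Complex.log ((t / 2 : ℝ) : ℂ) * 2).im = 0 := by
    rw [← Complex.ofReal_log (by positivity : (0 : ℝ) ≤ t / 2)]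
    simp [Complex.mul_im]
  rw [h, Complex.cpow_mul _ (by rw [hlog]; linarith [Real.pi_pos])
    (by rw [hlog]; linarith [Real.pi_pos])]
  congr 1
  rw [show (2 : ℂ) = ((2 : ℕ) : ℂ) by norm_num, Complex.cpow_natCast]
  push_cast
  ring

/-- For a bounded `C₀`-semigroup `(T(t))` on a Banach space `D` with bound `M`,
`0 < Re α < 1`, and the harmonic extension
`U(t)x = (1/Γ(α))(t/2)^{2α} ∫_0^∞ r^{-α-1} e^{-t²/(4r)} T(r)x dr` (`U(0)x = x`),
the map `t ↦ U(t)x` is continuous and bounded on `[0,∞)` with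
`‖U(t)x‖ ≤ M Γ(Re α)/|Γ(α)| ‖x‖`. -/
theorem stmt6 {D : Type*} [NormedAddCommGroup D] [NormedSpace ℂ D] [CompleteSpace D]
    (T : ℝ → D →L[ℂ] D) (M : ℝ) (α : ℂ) (h0 : 0 < α.re) (h1 : α.re < 1)
    (hT0 : T 0 = 1)
    (hsemi : ∀ s t : ℝ, 0 ≤ s → 0 ≤ t → T (s + t) = (T s).comp (T t))
    (hcont : ∀ x : D, ContinuousOn (fun t => T t x) (Ici 0))
    (hbdd : ∀ t : ℝ, 0 ≤ t → ‖T t‖ ≤ M)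
    (x : D) (u : ℝ → D) (hu0 : u 0 = x)
    (hut : ∀ t : ℝ, 0 < t → u t = (1 / Complex.Gamma α) •
      ((((t : ℂ) / 2) ^ (2 * α)) •
        ∫ r in Ioi (0:ℝ),
          (((r : ℂ) ^ (-α - 1)) * (Real.exp (-(t ^ 2) / (4 * r)) : ℂ)) • T r x)) :
    ContinuousOn u (Ici 0) ∧
      ∀ t : ℝ, 0 ≤ t →
        ‖u t‖ ≤ M * Real.Gamma α.re / ‖Complex.Gamma α‖ * ‖x‖ := by
  have hGamma_ne : Complex.Gamma α ≠ 0 := Complex.Gamma_ne_zero_of_re_pos h0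
  have hTle : ∀ r : ℝ, 0 ≤ r → ‖T r x‖ ≤ M * ‖x‖ := fun r hr =>
    le_trans ((T r).le_opNorm x) (mul_le_mul_of_nonneg_right (hbdd r hr) (norm_nonneg x))
  set g : ℝ → ℝ → D := fun t s =>
    (((s : ℂ) ^ (α - 1)) * (Real.exp (-s) : ℂ)) • T (t ^ 2 / (4 * s)) x with hg
  set bound : ℝ → ℝ := fun s => Real.exp (-s) * s ^ (α.re - 1) * (M * ‖x‖) with hbnd
  have hmaps : ∀ (t s : ℝ), 0 < s → t ^ 2 / (4 * s) ∈ Ici (0 : ℝ) := fun t s hs => by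
    have : (0:ℝ) ≤ t ^ 2 / (4 * s) := by positivity
    simpa using this
  have hmeas : ∀ t : ℝ, AEStronglyMeasurable (g t) (volume.restrict (Ioi 0)) := by
    intro t
    apply ContinuousOn.aestronglyMeasurable _ measurableSet_Ioi
    apply ContinuousOn.smul
    · apply ContinuousOn.mul
      · intro s hs
        exact (Complex.continuousAt_ofReal_cpow_const s _ (Or.inr (ne_of_gt hs))).continuousWithinAt
      · exact (Complex.continuous_ofReal.comp (Real.continuous_exp.comp continuous_neg)).continuousOn
    · refine (hcont x).comp ?_ fun s hs => hmaps t s hs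
      exact ContinuousOn.div continuousOn_const (by fun_prop)
        (fun s hs => by have : (0:ℝ) < s := hs; positivity)
  have hboundae : ∀ t : ℝ, ∀ᵐ s ∂(volume.restrict (Ioi (0:ℝ))), ‖g t s‖ ≤ bound s := by
    intro t
    filter_upwards [ae_restrict_mem measurableSet_Ioi] with s hs
    have hs' : (0:ℝ) < s := hs
    rw [hg, hbnd]
    simp only
    rw [norm_smul, norm_mul,
      Complex.norm_cpow_eq_rpow_re_of_pos hs', Complex.norm_real, Real.norm_eq_abs,
      abs_of_pos (Real.exp_pos _)]
    simp only [Complex.sub_re, Complex.one_re]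
    calc s ^ (α.re - 1) * Real.exp (-s) * ‖T (t ^ 2 / (4 * s)) x‖
        ≤ s ^ (α.re - 1) * Real.exp (-s) * (M * ‖x‖) := by
          apply mul_le_mul_of_nonneg_left (hTle _ (hmaps t s hs')) (by positivity)
      _ = Real.exp (-s) * s ^ (α.re - 1) * (M * ‖x‖) := by ring
  have hint_bound : Integrable bound (volume.restrict (Ioi (0:ℝ))) :=
    (Real.GammaIntegral_convergent h0).mul_const _
  have hVcont : Continuous fun t => ∫ s in Ioi (0:ℝ), g t s := by
    apply continuous_of_dominated hmeas hboundae hint_bound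
    filter_upwards [ae_restrict_mem measurableSet_Ioi] with s hs
    have hs' : (0:ℝ) < s := hs
    apply Continuous.const_smul
    refine (hcont x).comp_continuous ?_ fun t => hmaps t s hs'
    exact (continuous_pow 2).div_const _
  set V : ℝ → D := fun t => (1 / Complex.Gamma α) • ∫ s in Ioi (0:ℝ), g t s with hV
  have hVC : Continuous V := hVcont.const_smul _
  have hV0 : V 0 = x := by
    have he : ∀ s ∈ Ioi (0:ℝ), g 0 s = (((s : ℂ) ^ (α - 1)) * (Real.exp (-s) : ℂ)) • x := by
      intro s hs
      rw [hg]
      simp only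
      norm_num [hT0]
    rw [hV]
    simp only
    rw [setIntegral_congr_fun measurableSet_Ioi he, integral_smul_const]
    have hGint : (∫ s in Ioi (0:ℝ), ((s : ℂ) ^ (α - 1) * (Real.exp (-s) : ℂ)))
        = Complex.Gamma α := by
      rw [Complex.Gamma_eq_integral h0, Complex.GammaIntegral]
      congr 1
      ext s
      rw [mul_comm]
    rw [hGint, smul_smul, one_div, inv_mul_cancel₀ hGamma_ne, one_smul]
  have hVt : ∀ t : ℝ, 0 < t → u t = V t := by
    intro t ht
    rw [hut t ht]
    set c : ℝ := t ^ 2 / 4 with hc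
    have hcpos : (0:ℝ) < c := by positivity
    have hcne : (c : ℂ) ≠ 0 := Complex.ofReal_ne_zero.mpr hcpos.ne'
    set f : ℝ → ℝ := fun s => c * s⁻¹ with hf
    have hderiv : ∀ s ∈ Ioi (0:ℝ), HasDerivWithinAt f (c * (-(s ^ 2)⁻¹)) (Ioi 0) s :=
      fun s hs => (((hasDerivAt_inv (ne_of_gt hs)).const_mul c).hasDerivWithinAt)
    have hinj : InjOn f (Ioi 0) := by
      intro s1 h1 s2 h2 h
      rw [hf] at h
      simp only at h
      have := mul_left_cancel₀ hcpos.ne' h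
      exact inv_injective this
    have himg : f '' (Ioi 0) = Ioi 0 := by
      ext y
      simp only [mem_image, mem_Ioi, hf]
      constructor
      · rintro ⟨s, hs, rfl⟩
        positivity
      · intro hy
        exact ⟨c / y, by positivity, by field_simp⟩
    set G : ℝ → D := fun r =>
      (((r : ℂ) ^ (-α - 1)) * (Real.exp (-(t ^ 2) / (4 * r)) : ℂ)) • T r x with hG
    have hCoV : (∫ r in Ioi (0:ℝ), G r)
        = ∫ s in Ioi (0:ℝ), |c * (-(s ^ 2)⁻¹)| • G (f s) := by
      conv_lhs => rw [← himg]
      exact integral_image_eq_integral_abs_deriv_smul measurableSet_Ioi hderiv hinj G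
    have hpt : ∀ s ∈ Ioi (0:ℝ), |c * (-(s ^ 2)⁻¹)| • G (f s) = ((c : ℂ) ^ (-α)) • g t s := by
      intro s hs
      have hs' : (0:ℝ) < s := hs
      have habs : |c * (-(s ^ 2)⁻¹)| = c * (s ^ 2)⁻¹ := by
        rw [abs_mul, abs_of_pos hcpos, abs_neg, abs_inv, abs_of_pos (by positivity : (0:ℝ) < s ^ 2)]
      have hexp : -(t ^ 2) / (4 * (c * s⁻¹)) = -s := by
        rw [hc]; field_simp
      have harg2 : t ^ 2 / (4 * s) = c * s⁻¹ := by
        rw [hc]; field_simp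
      rw [habs, hG, hg]
      simp only [hf]
      rw [hexp, ← Complex.coe_smul, smul_smul, smul_smul, harg2, ← mul_assoc,
        aux_scal hcpos hs' α, mul_assoc]
    rw [hCoV, setIntegral_congr_fun measurableSet_Ioi hpt, integral_smul, hV]
    simp only
    congr 1
    rw [smul_smul, aux_pow ht α, ← hc, ← Complex.cpow_add _ _ hcne, add_neg_cancel,
      Complex.cpow_zero, one_smul]
  have huV : Set.EqOn u V (Ici 0) := by
    intro t ht
    rcases eq_or_lt_of_le (show (0:ℝ) ≤ t from ht) with h | h
    · rw [← h, hu0, hV0]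
    · exact hVt t h
  refine ⟨hVC.continuousOn.congr huV, fun t ht => ?_⟩
  rw [huV ht, hV]
  simp only
  rw [norm_smul]
  have hnle : ‖∫ s in Ioi (0:ℝ), g t s‖ ≤ ∫ s in Ioi (0:ℝ), bound s :=
    norm_integral_le_of_norm_le hint_bound (hboundae t)
  have hbint : ∫ s in Ioi (0:ℝ), bound s = Real.Gamma α.re * (M * ‖x‖) := by
    rw [hbnd]
    simp only
    rw [integral_mul_const, ← Real.Gamma_eq_integral h0]
  calc ‖(1 / Complex.Gamma α : ℂ)‖ * ‖∫ s in Ioi (0:ℝ), g t s‖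
      ≤ ‖(1 / Complex.Gamma α : ℂ)‖ * (Real.Gamma α.re * (M * ‖x‖)) := by
        apply mul_le_mul_of_nonneg_left _ (norm_nonneg _)
        rw [← hbint]; exact hnle
    _ = M * Real.Gamma α.re / ‖Complex.Gamma α‖ * ‖x‖ := by
        rw [norm_div, norm_one]
        ring
end

section
/- With notation as above, for every x ∈ D the map t ↦ U(t)x is infinitely differentiable on (0, ∞). -/
open MeasureTheory Set Filter

set_option maxHeartbeats 1000000

namespace Stmt7Helper

/-- Integrability of `r ^ p * exp (-c/r)` on `(0,∞)` for `p < -1`, `c > 0`. -/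
lemma intA {p c : ℝ} (hp : p < -1) (hc : 0 < c) :
    IntegrableOn (fun r : ℝ => r ^ p * Real.exp (-c / r)) (Ioi 0) := by
  have hcont : ContinuousOn (fun r : ℝ => r ^ p * Real.exp (-c / r)) (Ioi 0) := by
    intro r hr
    have hr0 : r ≠ 0 := ne_of_gt hr
    exact ((Real.continuousAt_rpow_const r p (Or.inl hr0)).mul
      ((Real.continuous_exp.continuousAt).comp
        (continuousAt_const.div continuousAt_id hr0))).continuousWithinAt
  have h1 : IntegrableOn (fun r : ℝ => r ^ p * Real.exp (-c / r)) (Ioi 1) := by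
    refine (integrableOn_Ioi_rpow_of_lt hp one_pos).mono'
      ((hcont.mono fun r (hr : r ∈ Ioi (1:ℝ)) => (lt_trans one_pos hr : (0:ℝ) < r)).aestronglyMeasurable measurableSet_Ioi) ?_
    filter_upwards [ae_restrict_mem measurableSet_Ioi] with r hr
    have hr0 : (0:ℝ) < r := lt_trans one_pos hr
    have hexp : Real.exp (-c / r) ≤ 1 := by
      rw [Real.exp_le_one_iff]
      rw [div_nonpos_iff]
      right
      constructor <;> [linarith; linarith]
    rw [Real.norm_eq_abs, abs_of_nonneg (by positivity)]
    calc r ^ p * Real.exp (-c / r) ≤ r ^ p * 1 := by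
          exact mul_le_mul_of_nonneg_left hexp (Real.rpow_nonneg hr0.le p)
      _ = r ^ p := mul_one _
  have h2 : IntegrableOn (fun r : ℝ => r ^ p * Real.exp (-c / r)) (Ioc 0 1) := by
    obtain ⟨n, hpn⟩ : ∃ n : ℕ, 0 ≤ p + n := by
      refine ⟨⌈-p⌉₊, ?_⟩
      have := Nat.le_ceil (-p)
      linarith
    have hconst : IntegrableOn (fun _ : ℝ => (n.factorial : ℝ) / c ^ n) (Ioc 0 1) :=
      integrableOn_const measure_Ioc_lt_top.ne
    refine hconst.mono'
      ((hcont.mono fun r hr => hr.1).aestronglyMeasurable measurableSet_Ioc) ?_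
    filter_upwards [ae_restrict_mem measurableSet_Ioc] with r hr
    obtain ⟨hr0, hr1⟩ := hr
    rw [Real.norm_eq_abs, abs_of_nonneg (by positivity)]
    have hexp : Real.exp (-c / r) ≤ (n.factorial : ℝ) * r ^ n / c ^ n := by
      have hb : (c / r) ^ n / (n.factorial : ℝ) ≤ Real.exp (c / r) :=
        Real.pow_div_factorial_le_exp _ (by positivity) n
      have hpos : (0:ℝ) < (c / r) ^ n / (n.factorial : ℝ) := by positivity
      rw [show -c / r = -(c / r) by ring, Real.exp_neg]
      calc (Real.exp (c / r))⁻¹ ≤ ((c / r) ^ n / (n.factorial : ℝ))⁻¹ := by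
            exact inv_anti₀ hpos hb
        _ = (n.factorial : ℝ) * r ^ n / c ^ n := by
            rw [div_pow]
            field_simp
    calc r ^ p * Real.exp (-c / r) ≤ r ^ p * ((n.factorial : ℝ) * r ^ n / c ^ n) := by
          exact mul_le_mul_of_nonneg_left hexp (Real.rpow_nonneg hr0.le p)
      _ = (n.factorial : ℝ) / c ^ n * (r ^ p * r ^ (n:ℝ)) := by
          rw [Real.rpow_natCast]; ring
      _ = (n.factorial : ℝ) / c ^ n * r ^ (p + (n:ℝ)) := by
          rw [← Real.rpow_add hr0]
      _ ≤ (n.factorial : ℝ) / c ^ n * 1 := by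
          exact mul_le_mul_of_nonneg_left (Real.rpow_le_one hr0.le hr1 hpn) (by positivity)
      _ = (n.factorial : ℝ) / c ^ n := mul_one _
  have := h2.union h1
  rwa [Ioc_union_Ioi_eq_Ioi zero_le_one] at this

variable {D : Type*} [NormedAddCommGroup D] [NormedSpace ℂ D]

lemma contAux (f : ℝ → D) (hf : ContinuousOn f (Ioi 0)) (α : ℂ) (g : ℝ → ℂ)
    (hg : ContinuousOn g (Ioi 0)) :
    ContinuousOn (fun r : ℝ => (((r:ℂ) ^ (-α-1)) * g r) • f r) (Ioi 0) := by
  refine ContinuousOn.smul (ContinuousOn.mul ?_ hg) hf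
  intro r hr
  exact (ContinuousAt.comp
    (continuousAt_cpow_const (Complex.mem_slitPlane_iff.2 (Or.inl (by simpa using (hr : (0:ℝ) < r)))))
    Complex.continuous_ofReal.continuousAt).continuousWithinAt

lemma ne4r {r : ℝ} (hr : 0 < r) : (4 : ℂ) * (r:ℂ) ≠ 0 :=
  mul_ne_zero (by norm_num) (Complex.ofReal_ne_zero.2 (ne_of_gt hr))

lemma contExp (s : ℂ) : ContinuousOn (fun r : ℝ => Complex.exp (-s / (4 * (r:ℂ)))) (Ioi 0) :=
  Complex.continuous_exp.comp_continuousOn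
    (continuousOn_const.div
      ((continuous_const.mul Complex.continuous_ofReal).continuousOn)
      (fun r hr => ne4r hr))

lemma normAux {α : ℂ} {r : ℝ} (hr : 0 < r) (z : ℂ) (v : D) :
    ‖(((r:ℂ) ^ (-α-1)) * z) • v‖ = r ^ (-α.re-1) * ‖z‖ * ‖v‖ := by
  rw [norm_smul, norm_mul,
    Complex.norm_cpow_eq_rpow_re_of_pos hr]
  norm_num [Complex.sub_re, Complex.neg_re, Complex.one_re]

lemma expRe {s : ℂ} {r : ℝ} (hr : 0 < r) :
    ‖Complex.exp (-s / (4 * (r:ℂ)))‖ = Real.exp (-s.re / (4 * r)) := by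
  rw [Complex.norm_exp]
  congr 1
  have h : -s / (4 * (r:ℂ)) = -s / (((4 * r : ℝ)):ℂ) := by push_cast; ring
  rw [h, Complex.div_ofReal_re, Complex.neg_re]

lemma hasDerivG [CompleteSpace D] (f : ℝ → D) (hf : ContinuousOn f (Ioi 0)) {C : ℝ}
    (hC : ∀ r ∈ Ioi (0:ℝ), ‖f r‖ ≤ C) {α : ℂ} (hα : 0 < α.re) {s₀ : ℂ} (hs : 0 < s₀.re) :
    HasDerivAt
      (fun s : ℂ => ∫ r in Ioi (0:ℝ), (((r:ℂ) ^ (-α-1)) * Complex.exp (-s / (4 * (r:ℂ)))) • f r)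
      (∫ r in Ioi (0:ℝ),
        (((r:ℂ) ^ (-α-1)) * (Complex.exp (-s₀ / (4 * (r:ℂ))) * (-1 / (4 * (r:ℂ))))) • f r) s₀ := by
  have hC0 : 0 ≤ C := le_trans (norm_nonneg (f 1)) (hC 1 (by norm_num))
  refine (hasDerivAt_integral_of_dominated_loc_of_deriv_le (μ := volume.restrict (Ioi (0:ℝ)))
    (F := fun s r => (((r:ℂ) ^ (-α-1)) * Complex.exp (-s / (4 * (r:ℂ)))) • f r)
    (F' := fun s r =>
      (((r:ℂ) ^ (-α-1)) * (Complex.exp (-s / (4 * (r:ℂ))) * (-1 / (4 * (r:ℂ))))) • f r)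
    (bound := fun r => C / 4 * (r ^ (-α.re-2) * Real.exp (-(s₀.re/8) / r)))
    (Metric.ball_mem_nhds s₀ (half_pos hs)) ?_ ?_ ?_ ?_ ?_ ?_).2
  · exact Eventually.of_forall fun s =>
      (contAux f hf α _ (contExp s)).aestronglyMeasurable measurableSet_Ioi
  · have hbint : IntegrableOn
        (fun r : ℝ => C * (r ^ (-α.re-1) * Real.exp (-(s₀.re/4) / r))) (Ioi 0) :=
      (intA (p := -α.re-1) (by linarith) (by positivity : (0:ℝ) < s₀.re/4)).const_mul C
    refine hbint.mono'
      ((contAux f hf α _ (contExp s₀)).aestronglyMeasurable measurableSet_Ioi) ?_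
    filter_upwards [ae_restrict_mem measurableSet_Ioi] with r hr
    have hr0 : (0:ℝ) < r := hr
    rw [normAux hr0, expRe hr0]
    have he : -s₀.re / (4 * r) = -(s₀.re/4) / r := by ring
    rw [he]
    calc r ^ (-α.re-1) * Real.exp (-(s₀.re/4) / r) * ‖f r‖
        ≤ r ^ (-α.re-1) * Real.exp (-(s₀.re/4) / r) * C := by
          exact mul_le_mul_of_nonneg_left (hC r hr) (by positivity)
      _ = C * (r ^ (-α.re-1) * Real.exp (-(s₀.re/4) / r)) := by ring
  · exact (contAux f hf α _
      ((contExp s₀).mul (continuousOn_const.div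
        ((continuous_const.mul Complex.continuous_ofReal).continuousOn)
        (fun r hr => ne4r hr)))).aestronglyMeasurable measurableSet_Ioi
  · filter_upwards [ae_restrict_mem measurableSet_Ioi] with r hr
    intro s hsball
    have hr0 : (0:ℝ) < r := hr
    have hsre : s₀.re / 2 < s.re := by
      have h1 : ‖s - s₀‖ < s₀.re / 2 := by
        simpa [Complex.dist_eq] using (Metric.mem_ball.1 hsball)
      have h2 : |(s - s₀).re| ≤ ‖s - s₀‖ := Complex.abs_re_le_norm _
      have h3 : |s.re - s₀.re| < s₀.re / 2 := by
        rw [show s.re - s₀.re = (s - s₀).re by simp] at *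
        exact lt_of_le_of_lt h2 h1
      have := abs_lt.1 h3
      linarith [this.1]
    have hnorm1 : ‖(-1 : ℂ) / (4 * (r:ℂ))‖ = 1 / (4 * r) := by
      rw [norm_div, norm_neg, norm_one]
      congr 1
      have : (4 : ℂ) * (r:ℂ) = (((4 * r : ℝ)):ℂ) := by push_cast; ring
      rw [this, Complex.norm_real, Real.norm_eq_abs, abs_of_pos (by positivity)]
    rw [normAux hr0, norm_mul, expRe hr0, hnorm1]
    have hee : Real.exp (-s.re / (4 * r)) ≤ Real.exp (-(s₀.re/8) / r) := by
      apply Real.exp_le_exp.2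
      rw [div_le_div_iff₀ (by positivity) (by positivity)]
      nlinarith
    have hrpow : r ^ (-α.re-2) = r ^ (-α.re-1) * r⁻¹ := by
      rw [← Real.rpow_neg_one r, ← Real.rpow_add hr0]
      ring_nf
    calc r ^ (-α.re-1) * (Real.exp (-s.re / (4 * r)) * (1 / (4 * r))) * ‖f r‖
        ≤ r ^ (-α.re-1) * (Real.exp (-(s₀.re/8) / r) * (1 / (4 * r))) * C := by
          refine mul_le_mul (mul_le_mul_of_nonneg_left ?_ (by positivity)) (hC r hr)
            (norm_nonneg _) (by positivity)
          exact mul_le_mul_of_nonneg_right hee (by positivity)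
      _ = C / 4 * (r ^ (-α.re-2) * Real.exp (-(s₀.re/8) / r)) := by
          rw [hrpow]; field_simp
  · exact (intA (p := -α.re-2) (by linarith) (by positivity : (0:ℝ) < s₀.re/8)).const_mul (C/4)
  · filter_upwards [ae_restrict_mem measurableSet_Ioi] with r hr
    intro s hsball
    exact ((((hasDerivAt_id s).neg.div_const (4 * (r:ℂ))).cexp).const_mul
      ((r:ℂ) ^ (-α-1))).smul_const (f r)

lemma analyticG [CompleteSpace D] (f : ℝ → D) (hf : ContinuousOn f (Ioi 0)) {C : ℝ}
    (hC : ∀ r ∈ Ioi (0:ℝ), ‖f r‖ ≤ C) {α : ℂ} (hα : 0 < α.re) :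
    AnalyticOnNhd ℂ
      (fun s : ℂ => ∫ r in Ioi (0:ℝ), (((r:ℂ) ^ (-α-1)) * Complex.exp (-s / (4 * (r:ℂ)))) • f r)
      {s : ℂ | 0 < s.re} := by
  refine DifferentiableOn.analyticOnNhd (fun s hs => ?_)
    (isOpen_lt continuous_const Complex.continuous_re)
  exact (hasDerivG f hf hC hα hs).differentiableAt.differentiableWithinAt

end Stmt7Helper

open Stmt7Helper in
/-- With the harmonic extension `U(t)x` of a bounded `C₀`-semigroup as above,
the map `t ↦ U(t)x` is infinitely differentiable on `(0,∞)`. -/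
theorem stmt7 {D : Type*} [NormedAddCommGroup D] [NormedSpace ℂ D] [CompleteSpace D]
    (T : ℝ → D →L[ℂ] D) (M : ℝ) (α : ℂ) (h0 : 0 < α.re) (h1 : α.re < 1)
    (hT0 : T 0 = 1)
    (hsemi : ∀ s t : ℝ, 0 ≤ s → 0 ≤ t → T (s + t) = (T s).comp (T t))
    (hcont : ∀ x : D, ContinuousOn (fun t => T t x) (Ici 0))
    (hbdd : ∀ t : ℝ, 0 ≤ t → ‖T t‖ ≤ M)
    (x : D) (u : ℝ → D) (hu0 : u 0 = x)
    (hut : ∀ t : ℝ, 0 < t → u t = (1 / Complex.Gamma α) •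
      ((((t : ℂ) / 2) ^ (2 * α)) •
        ∫ r in Ioi (0:ℝ),
          (((r : ℂ) ^ (-α - 1)) * (Real.exp (-(t ^ 2) / (4 * r)) : ℂ)) • T r x)) :
    ContDiffOn ℝ (⊤ : ℕ∞) u (Ioi 0) := by
  have hf : ContinuousOn (fun r : ℝ => T r x) (Ioi 0) := (hcont x).mono Ioi_subset_Ici_self
  have hC : ∀ r ∈ Ioi (0:ℝ), ‖T r x‖ ≤ M * ‖x‖ := fun r hr =>
    le_trans ((T r).le_opNorm x)
      (mul_le_mul_of_nonneg_right (hbdd r (le_of_lt hr)) (norm_nonneg x))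
  set G : ℂ → D :=
    fun s => ∫ r in Ioi (0:ℝ), (((r:ℂ) ^ (-α-1)) * Complex.exp (-s / (4 * (r:ℂ)))) • T r x
    with hGdef
  have hGa : AnalyticOnNhd ℂ G {s : ℂ | 0 < s.re} := analyticG _ hf hC h0
  have hequ : ∀ y : ℝ, 0 < y →
      u y = (1 / Complex.Gamma α) • ((((y:ℂ)/2) ^ (2*α)) • G ((y:ℂ)^2)) := by
    intro y hy
    rw [hut y hy]
    have hint : G ((y:ℂ)^2)
        = ∫ r in Ioi (0:ℝ), (((r:ℂ) ^ (-α-1)) * (Real.exp (-(y^2) / (4*r)) : ℂ)) • T r x := by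
      simp only [hGdef]
      have hfun : (fun r : ℝ =>
            (((r:ℂ) ^ (-α-1)) * Complex.exp (-((y:ℂ)^2) / (4 * (r:ℂ)))) • T r x)
          = fun r : ℝ => (((r:ℂ) ^ (-α-1)) * (Real.exp (-(y^2) / (4*r)) : ℂ)) • T r x := by
        funext r
        congr 2
        rw [Complex.ofReal_exp]
        congr 1
        push_cast
        ring
      rw [hfun]
    rw [hint]
  intro t ht
  have ht' : (0:ℝ) < t := ht
  have A1 : AnalyticAt ℝ (fun t : ℝ => ((t:ℂ)/2) ^ (2*α)) t := by
    have hbase : AnalyticAt ℂ (fun z : ℂ => (z/2) ^ (2*α)) (t:ℂ) := by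
      refine AnalyticAt.cpow (analyticAt_id.div analyticAt_const (by norm_num)) analyticAt_const ?_
      rw [Complex.mem_slitPlane_iff]
      left
      have h2 : ((t:ℂ)/2) = ((t/2 : ℝ) : ℂ) := by push_cast; ring
      rw [h2, Complex.ofReal_re]
      positivity
    exact (hbase.restrictScalars).comp (Complex.ofRealCLM.analyticAt t)
  have A2 : AnalyticAt ℝ (fun t : ℝ => G ((t:ℂ)^2)) t := by
    have h2 : AnalyticAt ℂ G ((t:ℂ)^2) := by
      apply hGa
      simp only [mem_setOf_eq, ← Complex.ofReal_pow, Complex.ofReal_re]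
      positivity
    have hsq : AnalyticAt ℝ (fun y : ℝ => ((y:ℂ))^2) t := by
      exact ((Complex.ofRealCLM.analyticAt t).pow 2)
    exact AnalyticAt.comp (f := fun y : ℝ => ((y:ℂ))^2) (x := t) h2.restrictScalars hsq
  have A3 : AnalyticAt ℝ
      (fun y : ℝ => (1 / Complex.Gamma α) • ((((y:ℂ)/2) ^ (2*α)) • G ((y:ℂ)^2))) t :=
    analyticAt_const.smul (A1.smul A2)
  exact (A3.contDiffAt.contDiffWithinAt).congr (fun y hy => hequ y hy) (hequ t ht')
end

section
/- Let x ∈ D(A) with A, T, U as above, M = sup‖T(t)‖. Then ‖(t²/(4αΓ(-α))) ∫_0^∞ r^{-α-2} e^{-t²/(4r)} (x − T(r)x) dr‖ ≤ C t^{2−2Reα} ‖Ax‖ for all t > 0, where C = Γ(Re α)·M/(4^{1−Reα}|α||Γ(-α)|); in particular this expression tends to 0 as t → 0+ since Re α < 1. -/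
open MeasureTheory Set Filter Topology

lemma aux_gamma_int {a c : ℝ} (ha : 0 < a) (hc : 0 < c) :
    IntegrableOn (fun r : ℝ => r ^ (-a - 1) * Real.exp (-c / r)) (Ioi 0) ∧
    ∫ r in Ioi (0:ℝ), r ^ (-a - 1) * Real.exp (-c / r) = Real.Gamma a * c ^ (-a) := by
  set f : ℝ → ℝ := fun y => y ^ (a - 1) * Real.exp (-(c * y)) with hfdef
  have hf : IntegrableOn f (Ioi 0) := by
    have := integrableOn_rpow_mul_exp_neg_mul_rpow (by linarith : (-1:ℝ) < a - 1) zero_lt_one hc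
    simpa [hfdef, neg_mul, Real.rpow_one] using this
  have hval : ∫ y in Ioi (0:ℝ), f y = Real.Gamma a * c ^ (-a) := by
    have h := Real.integral_rpow_mul_exp_neg_mul_Ioi ha hc
    rw [hfdef]
    rw [h, one_div, Real.inv_rpow hc.le, ← Real.rpow_neg hc.le, mul_comm]
  have key : ∀ x ∈ Ioi (0:ℝ),
      x ^ ((-1:ℝ) - 1) • f (x ^ (-1:ℝ)) = x ^ (-a - 1) * Real.exp (-c / x) := by
    intro x hx
    have hx0 : (0:ℝ) < x := hx
    rw [smul_eq_mul, Real.rpow_neg_one, hfdef]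
    simp only []
    rw [Real.inv_rpow hx0.le, ← Real.rpow_neg hx0.le]
    have h1 : x ^ ((-1:ℝ) - 1) * (x ^ (-(a-1)) * Real.exp (-(c * x⁻¹)))
        = x ^ ((-1:ℝ) - 1 + -(a-1)) * Real.exp (-(c * x⁻¹)) := by
      rw [Real.rpow_add hx0]; ring
    rw [h1]
    congr 1
    · norm_num; ring_nf
    · congr 1; field_simp
  constructor
  · have h2 := (integrableOn_Ioi_comp_rpow_iff' f (p := -1) (by norm_num)).mpr hf
    exact (h2.congr_fun key measurableSet_Ioi)
  · have h3 := integral_comp_rpow_Ioi f (p := (-1:ℝ)) (by norm_num)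
    rw [← hval, ← h3]
    refine setIntegral_congr_fun measurableSet_Ioi (fun x hx => ?_)
    rw [← key x hx]
    norm_num

lemma aux_sg {X : Type*} [NormedAddCommGroup X] [NormedSpace ℂ X]
    (A : X →ₗ.[ℂ] X) (M : ℝ) (T : ℝ → X →L[ℂ] X)
    (hTD : ∀ t : ℝ, 0 ≤ t → ∀ y ∈ closure (A.domain : Set X),
      T t y ∈ closure (A.domain : Set X))
    (hT0 : ∀ y ∈ closure (A.domain : Set X), T 0 y = y)
    (hsemi : ∀ s t : ℝ, 0 ≤ s → 0 ≤ t → ∀ y ∈ closure (A.domain : Set X),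
      T (s + t) y = T s (T t y))
    (hbdd : ∀ t : ℝ, 0 ≤ t → ∀ y ∈ closure (A.domain : Set X), ‖T t y‖ ≤ M * ‖y‖)
    (hgen : ∀ x : A.domain, ∀ t : ℝ, 0 ≤ t →
      ∃ hm : T t (x : X) ∈ A.domain,
        HasDerivAt (fun s => T s (x : X)) (-(A ⟨T t (x : X), hm⟩)) t)
    (hM0 : 0 ≤ M)
    (x : A.domain) :
    ∀ r : ℝ, 0 ≤ r → ‖(x : X) - T r (x:X)‖ ≤ M * ‖A x‖ * r := by
  have hxD : (x : X) ∈ closure (A.domain : Set X) := subset_closure x.2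
  have hclos : ∀ y z : X, y ∈ closure (A.domain : Set X) → z ∈ closure (A.domain : Set X) →
      y - z ∈ closure (A.domain : Set X) := by
    intro y z hy hz
    rw [← Submodule.topologicalClosure_coe] at hy hz ⊢
    exact Submodule.sub_mem _ hy hz
  -- slope tendsto at 0
  obtain ⟨hm0, hd0⟩ := hgen x 0 le_rfl
  have hx0 : T 0 (x:X) = (x:X) := hT0 _ hxD
  have hd0' : HasDerivAt (fun s => T s (x:X)) (-(A x)) 0 := by
    have : (⟨T 0 (x:X), hm0⟩ : A.domain) = x := Subtype.ext hx0
    rwa [this] at hd0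
  have hslope0 : Tendsto (fun h : ℝ => ‖h⁻¹ • (T h (x:X) - (x:X))‖) (𝓝[>] (0:ℝ))
      (𝓝 ‖A x‖) := by
    have h1 : Tendsto (slope (fun s => T s (x:X)) 0) (𝓝[>] (0:ℝ)) (𝓝 (-(A x))) := by
      have := (hd0'.hasDerivWithinAt (s := Ioi 0))
      rw [hasDerivWithinAt_iff_tendsto_slope] at this
      simpa [diff_singleton_eq_self (show (0:ℝ) ∉ Ioi 0 by simp)] using this
    have := h1.norm
    simp only [norm_neg] at this
    refine this.congr (fun h => ?_)
    simp [slope_def_module, hx0]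
  -- derivative bound at each s ≥ 0
  have hderiv : ∀ s : ℝ, 0 ≤ s → ∀ hm : T s (x:X) ∈ A.domain,
      ‖A ⟨T s (x:X), hm⟩‖ ≤ M * ‖A x‖ := by
    intro s hs hm
    obtain ⟨hm', hd⟩ := hgen x s hs
    have heq : (⟨T s (x:X), hm'⟩ : A.domain) = ⟨T s (x:X), hm⟩ := rfl
    rw [heq] at hd
    have hTs : T s (x:X) ∈ closure (A.domain : Set X) := hTD s hs _ hxD
    have h1 : Tendsto (slope (fun u => T u (x:X)) s) (𝓝[>] s) (𝓝 (-(A ⟨T s (x:X), hm⟩))) := by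
      have := (hd.hasDerivWithinAt (s := Ioi s))
      rw [hasDerivWithinAt_iff_tendsto_slope] at this
      simpa [diff_singleton_eq_self (show s ∉ Ioi s by simp)] using this
    have hmap : Tendsto (fun h : ℝ => s + h) (𝓝[>] (0:ℝ)) (𝓝[>] s) := by
      refine tendsto_nhdsWithin_of_tendsto_nhds_of_eventually_within _ ?_ ?_
      · have : Tendsto (fun h : ℝ => s + h) (𝓝 (0:ℝ)) (𝓝 (s + 0)) :=
          (continuous_const.add continuous_id).tendsto 0
        simpa using this.mono_left nhdsWithin_le_nhds
      · filter_upwards [self_mem_nhdsWithin] with h hh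
        simpa using (hh : (0:ℝ) < h)
    have h2 : Tendsto (fun h : ℝ => ‖slope (fun u => T u (x:X)) s (s + h)‖) (𝓝[>] (0:ℝ))
        (𝓝 ‖A ⟨T s (x:X), hm⟩‖) := by
      have := (h1.comp hmap).norm
      simpa using this
    have h3 : Tendsto (fun h : ℝ => M * ‖h⁻¹ • (T h (x:X) - (x:X))‖) (𝓝[>] (0:ℝ))
        (𝓝 (M * ‖A x‖)) := hslope0.const_mul M
    refine le_of_tendsto_of_tendsto h2 h3 ?_
    filter_upwards [self_mem_nhdsWithin] with h hh'
    have hh : (0:ℝ) < h := hh'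
    · have e1 : T (s + h) (x:X) = T s (T h (x:X)) := hsemi s h hs hh.le _ hxD
      have e2 : ‖slope (fun u => T u (x:X)) s (s + h)‖
          = |h|⁻¹ * ‖T s (T h (x:X)) - T s (x:X)‖ := by
        rw [slope_def_module, e1]
        rw [norm_smul]
        simp [abs_inv]
      rw [e2]
      have e3 : T s (T h (x:X)) - T s (x:X) = T s (T h (x:X) - (x:X)) := by
        rw [map_sub]
      rw [e3]
      have e4 : ‖T s (T h (x:X) - (x:X))‖ ≤ M * ‖T h (x:X) - (x:X)‖ :=
        hbdd s hs _ (hclos _ _ (hTD h hh.le _ hxD) hxD)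
      calc |h|⁻¹ * ‖T s (T h (x:X) - (x:X))‖ ≤ |h|⁻¹ * (M * ‖T h (x:X) - (x:X)‖) := by
            exact mul_le_mul_of_nonneg_left e4 (by positivity)
        _ = M * ‖h⁻¹ • (T h (x:X) - (x:X))‖ := by rw [norm_smul]; simp [abs_inv]; ring
  -- MVT
  intro r hr
  classical
  set F' : ℝ → X := fun s => if hs : 0 ≤ s then -(A ⟨T s (x:X), (hgen x s hs).choose⟩) else 0
    with hF'def
  have hF' : ∀ s ∈ Ici (0:ℝ), HasDerivWithinAt (fun u => T u (x:X)) (F' s) (Ici 0) s := by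
    intro s hs
    rw [hF'def]
    simp only [dif_pos (mem_Ici.mp hs)]
    exact ((hgen x s (mem_Ici.mp hs)).choose_spec).hasDerivWithinAt
  have hbd : ∀ s ∈ Ici (0:ℝ), ‖F' s‖ ≤ M * ‖A x‖ := by
    intro s hs
    rw [hF'def]
    simp only [dif_pos (mem_Ici.mp hs), norm_neg]
    exact hderiv s (mem_Ici.mp hs) _
  have := (convex_Ici (0:ℝ)).norm_image_sub_le_of_norm_hasDerivWithin_le hF' hbd
    (self_mem_Ici) (mem_Ici.mpr hr)
  rw [hx0] at this
  rw [norm_sub_rev]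
  simpa [abs_of_nonneg hr] using this

lemma aux_alg {t p q M N G a : ℝ} (ht : 0 < t) (hp : 0 < p) (hq : 0 < q) :
    t^2/(4*p*q) * (M*N*(G * (t^2/4)^(-a))) = G*M/(4^(1-a)*p*q) * t^(2-2*a) * N := by
  have h4 : (0:ℝ) < 4 := by norm_num
  have e1 : ((t:ℝ)^2)^(-a) = (t^(2*a))⁻¹ := by
    rw [← Real.rpow_natCast t 2, ← Real.rpow_mul ht.le, show ((2:ℕ):ℝ) * (-a) = -(2*a) by
      push_cast; ring, Real.rpow_neg ht.le]
  have e2 : t^(2-2*a) = t^2 * (t^(2*a))⁻¹ := by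
    rw [show (2-2*a:ℝ) = ((2:ℕ):ℝ) + -(2*a) by push_cast; ring, Real.rpow_add ht,
      Real.rpow_natCast, Real.rpow_neg ht.le]
  have e3 : (4:ℝ)^(1-a) = 4 * (4^a)⁻¹ := by
    rw [Real.rpow_sub h4, Real.rpow_one, div_eq_mul_inv]
  rw [Real.div_rpow (by positivity) h4.le, e1, e2, e3, Real.rpow_neg h4.le]
  have t2a : (0:ℝ) < t^(2*a) := Real.rpow_pos_of_pos ht _
  have f4a : (0:ℝ) < (4:ℝ)^a := Real.rpow_pos_of_pos h4 _
  field_simp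

/-- `A` non-negative in a Banach space `X`, `-A_D` generating a bounded `C₀`-semigroup
`(T(t))` on `D := closure D(A)`.  For `x ∈ D(A)` the harmonic extension `u(t) = U(t)x`
with bound `M`.  For `x ∈ D(A)` one has
`‖(t²/(4αΓ(-α))) ∫_0^∞ r^{-α-2} e^{-t²/(4r)} (x - T(r)x) dr‖ ≤ C t^{2-2Reα} ‖Ax‖`
with `C = Γ(Re α) M/(4^{1-Reα}|α||Γ(-α)|)`; in particular the expression tends to `0`
as `t → 0+`. -/
theorem stmt12 {X : Type*} [NormedAddCommGroup X] [NormedSpace ℂ X] [CompleteSpace X]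
    (A : X →ₗ.[ℂ] X) (R : ℝ → X →L[ℂ] X) (M : ℝ)
    (α : ℂ) (h0 : 0 < α.re) (h1 : α.re < 1)
    (hR : ∀ l : ℝ, 0 < l → ∀ y : X,
      ∃ h : R l y ∈ A.domain, A ⟨R l y, h⟩ + (l : ℂ) • R l y = y)
    (hRinv : ∀ l : ℝ, 0 < l → ∀ x : A.domain, R l (A x + (l : ℂ) • (x : X)) = x)
    (hM : ∀ l : ℝ, 0 < l → ‖(l : ℂ) • R l‖ ≤ M)
    (T : ℝ → X →L[ℂ] X)
    (hTD : ∀ t : ℝ, 0 ≤ t → ∀ y ∈ closure (A.domain : Set X),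
      T t y ∈ closure (A.domain : Set X))
    (hT0 : ∀ y ∈ closure (A.domain : Set X), T 0 y = y)
    (hsemi : ∀ s t : ℝ, 0 ≤ s → 0 ≤ t → ∀ y ∈ closure (A.domain : Set X),
      T (s + t) y = T s (T t y))
    (hcont : ∀ y ∈ closure (A.domain : Set X), ContinuousOn (fun t => T t y) (Ici 0))
    (hbdd : ∀ t : ℝ, 0 ≤ t → ∀ y ∈ closure (A.domain : Set X), ‖T t y‖ ≤ M * ‖y‖)
    (hgen : ∀ x : A.domain, ∀ t : ℝ, 0 ≤ t →
      ∃ hm : T t (x : X) ∈ A.domain,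
        HasDerivAt (fun s => T s (x : X)) (-(A ⟨T t (x : X), hm⟩)) t)
    (x : A.domain) :
    (∀ t : ℝ, 0 < t →
      ‖(((t : ℂ) ^ 2) / (4 * α * Complex.Gamma (-α))) •
          ∫ r in Ioi (0:ℝ),
            (((r : ℂ) ^ (-α - 2)) * (Real.exp (-(t ^ 2) / (4 * r)) : ℂ)) •
              ((x : X) - T r (x : X))‖ ≤
        Real.Gamma α.re * M / (4 ^ (1 - α.re) * ‖α‖ *
            ‖Complex.Gamma (-α)‖) *
          t ^ (2 - 2 * α.re) * ‖A x‖) ∧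
    Tendsto (fun t : ℝ =>
        (((t : ℂ) ^ 2) / (4 * α * Complex.Gamma (-α))) •
          ∫ r in Ioi (0:ℝ),
            (((r : ℂ) ^ (-α - 2)) * (Real.exp (-(t ^ 2) / (4 * r)) : ℂ)) •
              ((x : X) - T r (x : X)))
      (𝓝[>] (0:ℝ)) (𝓝 0) := by
  have hM0 : 0 ≤ M := le_trans (norm_nonneg _) (hM 1 one_pos)
  have hsg := aux_sg A M T hTD hT0 hsemi hbdd hgen hM0 x
  have hαne : α ≠ 0 := by
    intro h; rw [h] at h0; simp at h0
  have hαpos : 0 < ‖α‖ := by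
    simpa [norm_pos_iff] using hαne
  have hΓne : Complex.Gamma (-α) ≠ 0 := by
    apply Complex.Gamma_ne_zero
    intro m hm
    have hαm : α = (m : ℂ) := by
      have := neg_injective hm
      simpa using this
    have : α.re = (m : ℝ) := by rw [hαm]; simp
    rcases m with _ | m
    · rw [this] at h0; simp at h0
    · rw [this] at h1
      have : (1:ℝ) ≤ ((m+1 : ℕ) : ℝ) := by push_cast; linarith [Nat.cast_nonneg (α := ℝ) m]
      linarith
  have hΓpos : 0 < ‖Complex.Gamma (-α)‖ := by
    simpa [norm_pos_iff] using hΓne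
  have key : ∀ t : ℝ, 0 < t →
      ‖(((t : ℂ) ^ 2) / (4 * α * Complex.Gamma (-α))) •
          ∫ r in Ioi (0:ℝ),
            (((r : ℂ) ^ (-α - 2)) * (Real.exp (-(t ^ 2) / (4 * r)) : ℂ)) •
              ((x : X) - T r (x : X))‖ ≤
        Real.Gamma α.re * M / (4 ^ (1 - α.re) * ‖α‖ *
            ‖Complex.Gamma (-α)‖) *
          t ^ (2 - 2 * α.re) * ‖A x‖ := by
    intro t ht
    have hc0 : (0:ℝ) < t^2/4 := by positivity
    obtain ⟨hInt, hVal⟩ := aux_gamma_int h0 hc0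
    -- pointwise bound
    have hnorm : ∀ r ∈ Ioi (0:ℝ),
        ‖(((r : ℂ) ^ (-α - 2)) * (Real.exp (-(t ^ 2) / (4 * r)) : ℂ)) •
            ((x : X) - T r (x : X))‖ ≤
          M * ‖A x‖ * (r ^ (-α.re - 1) * Real.exp (-(t^2/4) / r)) := by
      intro r hr
      have hr0 : (0:ℝ) < r := hr
      rw [norm_smul]
      have habs : ‖((r : ℂ) ^ (-α - 2)) * (Real.exp (-(t ^ 2) / (4 * r)) : ℂ)‖
          = r ^ (-α.re - 2) * Real.exp (-(t^2/4) / r) := by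
        rw [norm_mul,
          Complex.norm_cpow_eq_rpow_re_of_pos hr0, Complex.norm_real, Real.norm_eq_abs,
          abs_of_nonneg (Real.exp_pos _).le]
        have hre : (-α - 2).re = -α.re - 2 := by simp
        rw [hre]
        congr 2
        ring
      rw [habs]
      have hb := hsg r hr0.le
      calc r ^ (-α.re - 2) * Real.exp (-(t^2/4) / r) * ‖(x : X) - T r (x:X)‖
          ≤ r ^ (-α.re - 2) * Real.exp (-(t^2/4) / r) * (M * ‖A x‖ * r) := by
            apply mul_le_mul_of_nonneg_left hb (by positivity)
        _ = M * ‖A x‖ * (r ^ (-α.re - 1) * Real.exp (-(t^2/4) / r)) := by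
            rw [show (-α.re - 1 : ℝ) = (-α.re - 2) + 1 by ring, Real.rpow_add hr0,
              Real.rpow_one]
            ring
    -- integral bound
    have hIbound : ‖∫ r in Ioi (0:ℝ),
        (((r : ℂ) ^ (-α - 2)) * (Real.exp (-(t ^ 2) / (4 * r)) : ℂ)) •
          ((x : X) - T r (x : X))‖ ≤
        M * ‖A x‖ * (Real.Gamma α.re * (t^2/4) ^ (-α.re)) := by
      have hg : Integrable (fun r : ℝ => M * ‖A x‖ * (r ^ (-α.re - 1) *
          Real.exp (-(t^2/4) / r))) (volume.restrict (Ioi 0)) := hInt.const_mul _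
      have hae : ∀ᵐ (r : ℝ) ∂(volume.restrict (Ioi (0:ℝ))),
          ‖(((r : ℂ) ^ (-α - 2)) * (Real.exp (-(t ^ 2) / (4 * r)) : ℂ)) •
            ((x : X) - T r (x : X))‖ ≤
          M * ‖A x‖ * (r ^ (-α.re - 1) * Real.exp (-(t^2/4) / r)) := by
        rw [ae_restrict_iff' measurableSet_Ioi]
        exact ae_of_all _ hnorm
      refine le_trans (norm_integral_le_of_norm_le hg hae) ?_
      rw [integral_const_mul, hVal]
    -- scalar norm
    have hS : ‖((t : ℂ) ^ 2) / (4 * α * Complex.Gamma (-α))‖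
        = t^2 / (4 * ‖α‖ * ‖Complex.Gamma (-α)‖) := by
      rw [norm_div, norm_pow, norm_mul, norm_mul]
      simp [Complex.norm_real, abs_of_pos ht, sq_abs]
    rw [norm_smul, hS]
    calc t^2 / (4 * ‖α‖ * ‖Complex.Gamma (-α)‖) * ‖_‖
        ≤ t^2 / (4 * ‖α‖ * ‖Complex.Gamma (-α)‖) *
          (M * ‖A x‖ * (Real.Gamma α.re * (t^2/4) ^ (-α.re))) := by
          apply mul_le_mul_of_nonneg_left hIbound (by positivity)
      _ = Real.Gamma α.re * M / (4 ^ (1 - α.re) * ‖α‖ *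
            ‖Complex.Gamma (-α)‖) * t ^ (2 - 2 * α.re) * ‖A x‖ := by
          have := aux_alg (M := M) (N := ‖A x‖) (G := Real.Gamma α.re) (a := α.re)
            ht hαpos hΓpos
          calc t^2 / (4 * ‖α‖ * ‖Complex.Gamma (-α)‖) *
                (M * ‖A x‖ * (Real.Gamma α.re * (t^2/4) ^ (-α.re)))
              = t^2 / (4 * (‖α‖) * (‖Complex.Gamma (-α)‖)) *
                (M * ‖A x‖ * (Real.Gamma α.re * (t^2/4) ^ (-α.re))) := by ring
            _ = Real.Gamma α.re * M / (4 ^ (1 - α.re) * ‖α‖ *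
                ‖Complex.Gamma (-α)‖) * t ^ (2 - 2 * α.re) * ‖A x‖ := by
                rw [this]
  refine ⟨key, ?_⟩
  have hp : (0:ℝ) < 2 - 2 * α.re := by linarith
  have hrp : Tendsto (fun t : ℝ => t ^ (2 - 2 * α.re)) (𝓝[>] (0:ℝ)) (𝓝 0) := by
    have hcont' := (Real.continuousAt_rpow_const 0 (2 - 2 * α.re) (Or.inr hp.le)).tendsto
    rw [Real.zero_rpow hp.ne'] at hcont'
    exact hcont'.mono_left nhdsWithin_le_nhds
  have hg : Tendsto (fun t : ℝ =>
      Real.Gamma α.re * M / (4 ^ (1 - α.re) * ‖α‖ *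
        ‖Complex.Gamma (-α)‖) * t ^ (2 - 2 * α.re) * ‖A x‖)
      (𝓝[>] (0:ℝ)) (𝓝 0) := by
    have := (hrp.const_mul (Real.Gamma α.re * M / (4 ^ (1 - α.re) * ‖α‖ *
        ‖Complex.Gamma (-α)‖))).mul_const ‖A x‖
    simpa using this
  refine squeeze_zero_norm' ?_ hg
  filter_upwards [self_mem_nhdsWithin] with t ht
  exact key t ht
end

section
/- For f ∈ C(Ω) with range in the sector S_θ (θ ≤ π/2) and the multiplication operator A g = f g in C_b(Ω) as above, there is a constant C > 0 such that sup_{x∈Ω} |(f(x)+ε)^α − f(x)^α| ≤ C ε^{Re α} for all ε > 0, for any fixed α with 0 < Re α < 1. -/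
open Set

lemma absA (α w : ℂ) : ‖w ^ α‖ ≤
    Real.exp (Real.pi * |α.im|) * ‖w‖ ^ α.re := by
  refine (Complex.norm_cpow_le w α).trans ?_
  rw [div_le_iff₀ (Real.exp_pos _), mul_comm (Real.exp _), mul_assoc, ← Real.exp_add]
  have hbase : (0:ℝ) ≤ ‖w‖ ^ α.re := Real.rpow_nonneg (norm_nonneg w) _
  have : (1:ℝ) ≤ Real.exp (Real.pi * |α.im| + w.arg * α.im) := by
    rw [Real.one_le_exp_iff]
    have h1 : |w.arg * α.im| ≤ Real.pi * |α.im| := by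
      rw [abs_mul]
      exact mul_le_mul_of_nonneg_right (Complex.abs_arg_le_pi w) (abs_nonneg _)
    nlinarith [neg_abs_le (w.arg * α.im)]
  nlinarith

lemma keyB (α : ℂ) (h0 : 0 < α.re) (h1 : α.re < 1) (z : ℂ) (hz : 0 ≤ z.re)
    (ε : ℝ) (hε : 0 < ε) :
    ‖(z + ε) ^ α - z ^ α‖ ≤
      Real.exp (Real.pi * |α.im|) * (‖α‖ + 3) * ε ^ α.re := by
  set K := Real.exp (Real.pi * |α.im|) with hK
  have hKpos : 0 < K := Real.exp_pos _
  have hεr : (0:ℝ) < ε ^ α.re := Real.rpow_pos_of_pos hε _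
  rcases le_or_gt ‖z‖ ε with hle | hlt
  · -- small z
    have h1' : ‖(z + ε) ^ α‖ ≤ K * (2 * ε) ^ α.re := by
      refine (absA α _).trans ?_
      gcongr
      calc ‖z + ε‖ ≤ ‖z‖ + ‖(ε:ℂ)‖ := norm_add_le _ _
        _ ≤ ε + ε := by
            rw [Complex.norm_real, Real.norm_eq_abs, abs_of_pos hε]; linarith
        _ = 2 * ε := by ring
    have h2' : ‖z ^ α‖ ≤ K * ε ^ α.re := by
      refine (absA α _).trans ?_
      gcongr
    have h2pow : (2 * ε) ^ α.re ≤ 2 * ε ^ α.re := by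
      rw [Real.mul_rpow (by norm_num) hε.le]
      have : (2:ℝ) ^ α.re ≤ 2 ^ (1:ℝ) :=
        Real.rpow_le_rpow_of_exponent_le one_le_two h1.le
      rw [Real.rpow_one] at this
      nlinarith
    calc ‖(z + ε) ^ α - z ^ α‖
        ≤ ‖(z + ε) ^ α‖ + ‖z ^ α‖ := by
          simpa using norm_sub_le ((z + (ε:ℂ)) ^ α) (z ^ α)
      _ ≤ K * (2 * ε) ^ α.re + K * ε ^ α.re := by linarith
      _ ≤ K * 3 * ε ^ α.re := by nlinarith
      _ ≤ K * (‖α‖ + 3) * ε ^ α.re := by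
          nlinarith [mul_nonneg (mul_nonneg hKpos.le (norm_nonneg α)) hεr.le]
  · -- large z
    have hzne : z ≠ 0 := by
      intro h; rw [h] at hlt; simp at hlt; linarith
    have habs : ∀ t : ℝ, 0 ≤ t → ‖z‖ ≤ ‖z + (t:ℂ)‖ := by
      intro t ht
      rw [Complex.norm_def, Complex.norm_def]
      apply Real.sqrt_le_sqrt
      simp only [Complex.normSq_apply, Complex.add_re, Complex.add_im,
        Complex.ofReal_re, Complex.ofReal_im]
      nlinarith
    have hmem : ∀ t : ℝ, t ∈ Icc (0:ℝ) ε → (z + (t:ℂ)) ∈ Complex.slitPlane := by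
      intro t ht
      rw [Complex.mem_slitPlane_iff]
      rcases eq_or_ne z.im 0 with him | him
      · left
        have hre : 0 < z.re := by
          rcases lt_or_eq_of_le hz with h | h
          · exact h
          · exact absurd (Complex.ext h.symm him) hzne
        simp only [Complex.add_re, Complex.ofReal_re]
        linarith [ht.1]
      · right; simpa using him
    set g : ℝ → ℂ := fun t => (z + (t:ℂ)) ^ α with hg
    set g' : ℝ → ℂ := fun t => α * (z + (t:ℂ)) ^ (α - 1) * 1 with hg'
    have hderiv : ∀ t ∈ Icc (0:ℝ) ε, HasDerivWithinAt g (g' t) (Icc 0 ε) t := by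
      intro t ht
      have hinner : HasDerivAt (fun w : ℂ => z + w) 1 (t:ℂ) := by
        simpa using (hasDerivAt_id ((t:ℝ):ℂ)).const_add z
      have hC : HasDerivAt (fun w : ℂ => (z + w) ^ α)
          (α * (z + (t:ℂ)) ^ (α - 1) * 1) (t:ℂ) :=
        hinner.cpow_const (hmem t ht)
      exact hC.comp_ofReal.hasDerivWithinAt
    have hbound : ∀ t ∈ Ico (0:ℝ) ε, ‖g' t‖ ≤ ‖α‖ * (K * ε ^ (α.re - 1)) := by
      intro t ht
      simp only [hg', mul_one, norm_mul]
      gcongr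
      refine (absA (α - 1) _).trans ?_
      simp only [Complex.sub_im, Complex.one_im, sub_zero, Complex.sub_re, Complex.one_re]
      rw [← hK]
      gcongr K * ?_
      have h1 : ε ≤ ‖z + (t:ℂ)‖ := (hlt.le.trans (habs t ht.1))
      exact Real.rpow_le_rpow_of_nonpos hε h1 (by linarith)
    have := norm_image_sub_le_of_norm_deriv_le_segment' hderiv hbound ε
      (right_mem_Icc.mpr hε.le)
    simp only [hg, Complex.ofReal_zero, add_zero, sub_zero] at this
    calc ‖(z + ε) ^ α - z ^ α‖
        ≤ ‖α‖ * (K * ε ^ (α.re - 1)) * ε := this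
      _ = K * ‖α‖ * ε ^ α.re := by
          rw [Real.rpow_sub hε, Real.rpow_one]; field_simp
      _ ≤ K * (‖α‖ + 3) * ε ^ α.re := by nlinarith


/-- For `f : Ω → ℂ` continuous with range in the sector `S_θ`, `θ ≤ π/2`, and
`0 < Re α < 1`, there is a constant `C > 0` with
`sup_x |(f(x)+ε)^α − f(x)^α| ≤ C ε^{Re α}` for all `ε > 0` (principal powers). -/
theorem stmt16 {n : ℕ} (Ω : Set (EuclideanSpace ℝ (Fin n))) (hΩ : IsOpen Ω)
    (θ : ℝ) (hθ0 : 0 ≤ θ) (hθ : θ ≤ Real.pi / 2)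
    (f : Ω → ℂ) (hf : Continuous f)
    (hsec : Set.range f ⊆
      {z : ℂ | z = 0 ∨ ((0 < z.re ∨ z.im ≠ 0) ∧ |Complex.arg z| ≤ θ)})
    (α : ℂ) (h0 : 0 < α.re) (h1 : α.re < 1) :
    ∃ C : ℝ, 0 < C ∧ ∀ ε : ℝ, 0 < ε → ∀ x : Ω,
      ‖(f x + (ε : ℂ)) ^ α - (f x) ^ α‖ ≤ C * ε ^ α.re := by
  refine ⟨Real.exp (Real.pi * |α.im|) * (‖α‖ + 3), ?_, ?_⟩
  · positivity
  · intro ε hε x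
    have hzre : 0 ≤ (f x).re := by
      rcases hsec (mem_range_self x) with h | h
      · simp [h]
      · rw [← Complex.abs_arg_le_pi_div_two_iff]
        exact h.2.trans hθ
    exact keyB α h0 h1 (f x) hzre ε hε
end
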